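/- arXiv:math/0109074 — 9 statements merged into one kernel-verified Lean document; each statement's English description precedes it below -/
import Mathlib

section
/- Let A be an n×n real matrix, b a nonzero vector of ℝⁿ, and λ > 0. If λ^{-m} A^m b → 0 as m → ∞, then the local spectral radius ρ_b(A) := limsup_{m→∞} ‖A^m b‖^{1/m} satisfies ρ_b(A) < λ. -/
open Filter Matrix
open scoped Topology

/-- The local spectral radius of `A` at `b`, defined as `limsup ‖A^m b‖^(1/m)`. -/
noncomputable def localRho {n : ℕ} (A : Matrix (Fin n) (Fin n) ℝ) (b : Fin n → ℝ) : ℝ :=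
  limsup (fun m : ℕ => ‖(A ^ m).mulVec b‖ ^ ((1 : ℝ) / m)) atTop

/-!
The vectors `v` with `lam⁻¹ ^ m • A ^ m v → 0` form an `A`-invariant subspace containing `b`.
On this finite-dimensional subspace, pointwise convergence of the powers of `lam⁻¹ • A` to `0`
is convergence in operator norm, so some power has norm at most `1/2` and the powers decay
like `K μ ^ m` with `μ < 1`. Hence `‖A ^ m b‖ ≤ K' (lam μ) ^ m`, and the limsup is at most
`lam μ < lam`.
-/

section NormPow

variable {R : Type*} [SeminormedRing R]

theorem norm_pow_mul_add_le (a : R) (k q r : ℕ) :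
    ‖a ^ (k * q + r)‖ ≤ ‖a ^ k‖ ^ q * ‖a ^ r‖ := by
  induction q with
  | zero => simp
  | succ q ih =>
    calc ‖a ^ (k * (q + 1) + r)‖ = ‖a ^ k * a ^ (k * q + r)‖ := by
          rw [mul_add_one, add_comm (k * q) k, add_assoc, pow_add]
      _ ≤ ‖a ^ k‖ * (‖a ^ k‖ ^ q * ‖a ^ r‖) := norm_mul_le_of_le le_rfl ih
      _ = ‖a ^ k‖ ^ (q + 1) * ‖a ^ r‖ := by ring

theorem exists_norm_pow_le_mul_pow {a : R} {k : ℕ} {μ : ℝ} (hk : k ≠ 0) (hμ : 0 < μ)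
    (h : ‖a ^ k‖ ≤ μ ^ k) : ∃ K, ∀ m, ‖a ^ m‖ ≤ K * μ ^ m := by
  refine ⟨∑ r ∈ Finset.range k, ‖a ^ r‖ / μ ^ r, fun m => ?_⟩
  obtain ⟨q, r, hr, rfl⟩ : ∃ q r, r < k ∧ m = k * q + r :=
    ⟨m / k, m % k, Nat.mod_lt m (Nat.pos_of_ne_zero hk), (Nat.div_add_mod m k).symm⟩
  calc ‖a ^ (k * q + r)‖ ≤ ‖a ^ k‖ ^ q * ‖a ^ r‖ := norm_pow_mul_add_le a k q r
    _ ≤ (μ ^ k) ^ q * ‖a ^ r‖ := by gcongr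
    _ = ‖a ^ r‖ / μ ^ r * μ ^ (k * q + r) := by field_simp; ring
    _ ≤ (∑ r ∈ Finset.range k, ‖a ^ r‖ / μ ^ r) * μ ^ (k * q + r) := by
      gcongr
      exact Finset.single_le_sum (f := fun r => ‖a ^ r‖ / μ ^ r) (fun r _ => by positivity)
        (Finset.mem_range.2 hr)

theorem exists_norm_pow_le_of_tendsto_pow_nhds_zero {a : R}
    (h : Tendsto (fun m : ℕ => a ^ m) atTop (𝓝 0)) :
    ∃ μ K : ℝ, 0 < μ ∧ μ < 1 ∧ ∀ m, ‖a ^ m‖ ≤ K * μ ^ m := by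
  obtain ⟨k, hk_half, hk⟩ := ((tendsto_zero_iff_norm_tendsto_zero.1 h).eventually_le_const
    (by norm_num : (0 : ℝ) < 1 / 2)).and (eventually_ne_atTop 0) |>.exists
  set μ : ℝ := (1 / 2) ^ ((k : ℝ)⁻¹)
  have hμk : μ ^ k = 1 / 2 := Real.rpow_inv_natCast_pow (by norm_num) hk
  have hμ : 0 < μ := by positivity
  obtain ⟨K, hK⟩ := exists_norm_pow_le_mul_pow hk hμ (hk_half.trans hμk.ge)
  exact ⟨μ, K, hμ, Real.rpow_lt_one (by norm_num) (by norm_num) (by positivity), hK⟩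

end NormPow

theorem limsup_rpow_one_div_le_of_le_mul_pow {x : ℕ → ℝ} {K ν : ℝ} (hx : ∀ m, 0 ≤ x m)
    (hν : 0 < ν) (h : ∀ m, x m ≤ K * ν ^ m) :
    limsup (fun m : ℕ => x m ^ ((1 : ℝ) / m)) atTop ≤ ν := by
  set K' := max K 1
  have hK' : 0 < K' := zero_lt_one.trans_le (le_max_right K 1)
  have hlim : Tendsto (fun m : ℕ => K' ^ ((1 : ℝ) / m) * ν) atTop (𝓝 ν) := by
    simpa using (tendsto_const_nhds.rpow tendsto_one_div_atTop_nhds_zero_nat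
      (Or.inl hK'.ne')).mul_const ν
  have hle : ∀ᶠ m : ℕ in atTop, x m ^ ((1 : ℝ) / m) ≤ K' ^ ((1 : ℝ) / m) * ν := by
    filter_upwards [eventually_ne_atTop 0] with m hm
    calc x m ^ ((1 : ℝ) / m) ≤ (K' * ν ^ m) ^ ((1 : ℝ) / m) :=
        have hK : K * ν ^ m ≤ K' * ν ^ m :=
          mul_le_mul_of_nonneg_right (le_max_left K 1) (by positivity)
        Real.rpow_le_rpow (hx m) ((h m).trans hK) (by positivity)
      _ = K' ^ ((1 : ℝ) / m) * ν := by
          rw [Real.mul_rpow hK'.le (by positivity), one_div, Real.pow_rpow_inv_natCast hν.le hm]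
  calc limsup (fun m : ℕ => x m ^ ((1 : ℝ) / m)) atTop
      ≤ limsup (fun m : ℕ => K' ^ ((1 : ℝ) / m) * ν) atTop :=
        limsup_le_limsup hle (isCoboundedUnder_le_of_le atTop fun m => Real.rpow_nonneg (hx m) _)
          hlim.isBoundedUnder_le
    _ = ν := hlim.limsup_eq

namespace ContinuousLinearMap

section Semiring

variable {R E : Type*} [Semiring R] [TopologicalSpace E] [AddCommMonoid E] [Module R E]

theorem coe_restrict_pow_apply {T : E →L[R] E} {p : Submodule R E} (h : ∀ x ∈ p, T x ∈ p)
    (m : ℕ) (x : p) : ((T.restrict h ^ m) x : E) = (T ^ m) x := by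
  induction m with
  | zero => rfl
  | succ m ih =>
    rw [pow_succ', mul_apply_eq_comp, coe_restrict_apply, ih, ← mul_apply_eq_comp, ← pow_succ']

variable [ContinuousAdd E] [ContinuousConstSMul R E]

def stableSubmodule (T : E →L[R] E) : Submodule R E where
  carrier := {v | Tendsto (fun m : ℕ => (T ^ m) v) atTop (𝓝 0)}
  zero_mem' := by simp [tendsto_const_nhds]
  add_mem' {v w} hv hw := by simpa only [Set.mem_ofPred_eq, map_add, add_zero] using hv.add hw
  smul_mem' c v hv := by simpa only [Set.mem_ofPred_eq, map_smul, smul_zero] using hv.const_smul c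

variable {T : E →L[R] E}

theorem mem_stableSubmodule {v : E} :
    v ∈ T.stableSubmodule ↔ Tendsto (fun m : ℕ => (T ^ m) v) atTop (𝓝 0) :=
  Iff.rfl

theorem apply_mem_stableSubmodule {v : E} (hv : v ∈ T.stableSubmodule) :
    T v ∈ T.stableSubmodule := by
  have hTv : Tendsto (fun m : ℕ => T ((T ^ m) v)) atTop (𝓝 0) :=
    (T.continuous.tendsto' 0 0 (map_zero T)).comp hv
  refine hTv.congr fun m => ?_
  rw [← mul_apply_eq_comp, ← pow_succ', pow_succ, mul_apply_eq_comp]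

end Semiring

section FiniteDimensional

variable {𝕜 E : Type*} [NontriviallyNormedField 𝕜] [CompleteSpace 𝕜] [NormedAddCommGroup E]
  [NormedSpace 𝕜 E] [FiniteDimensional 𝕜 E]

theorem tendsto_nhds_zero_of_forall_tendsto_apply {F ι : Type*} [NormedAddCommGroup F]
    [NormedSpace 𝕜 F] {l : Filter ι} {u : ι → E →L[𝕜] F}
    (h : ∀ v, Tendsto (fun i => u i v) l (𝓝 0)) : Tendsto u l (𝓝 0) := by
  set β := Module.finBasis 𝕜 E
  obtain ⟨C, -, hC⟩ := β.exists_opNorm_le (F := F)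
  refine squeeze_zero_norm (fun i => hC (M := ∑ j, ‖u i (β j)‖) (by positivity)
    fun j => Finset.single_le_sum (fun j _ => norm_nonneg (u i (β j))) (Finset.mem_univ j)) ?_
  simpa using (tendsto_finsetSum Finset.univ fun j _ => (h (β j)).norm).const_mul C

theorem exists_norm_pow_apply_le_of_mem_stableSubmodule (T : E →L[𝕜] E) :
    ∃ μ K : ℝ, 0 < μ ∧ μ < 1 ∧
      ∀ v ∈ T.stableSubmodule, ∀ m : ℕ, ‖(T ^ m) v‖ ≤ K * μ ^ m * ‖v‖ := by
  set S := T.restrict fun _ => apply_mem_stableSubmodule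
  have hS : Tendsto (fun m : ℕ => S ^ m) atTop (𝓝 0) :=
    tendsto_nhds_zero_of_forall_tendsto_apply fun w => tendsto_subtype_rng.2 <|
      (mem_stableSubmodule.1 w.2).congr fun m => (coe_restrict_pow_apply _ m w).symm
  obtain ⟨μ, K, hμ, hμ1, hK⟩ := exists_norm_pow_le_of_tendsto_pow_nhds_zero hS
  refine ⟨μ, K, hμ, hμ1, fun v hv m => ?_⟩
  calc ‖(T ^ m) v‖ = ‖(S ^ m) ⟨v, hv⟩‖ :=
        congrArg norm (coe_restrict_pow_apply _ m ⟨v, hv⟩).symm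
    _ ≤ ‖S ^ m‖ * ‖v‖ := (S ^ m).le_opNorm _
    _ ≤ K * μ ^ m * ‖v‖ := by gcongr; exact hK m

end FiniteDimensional

end ContinuousLinearMap

theorem stmt1_general {n : ℕ} (A : Matrix (Fin n) (Fin n) ℝ) (b : Fin n → ℝ)
    (lam : ℝ) (hlam : 0 < lam)
    (h : Tendsto (fun m : ℕ => lam⁻¹ ^ m • (A ^ m).mulVec b) atTop (𝓝 0)) :
    localRho A b < lam := by
  set T := Module.End.toContinuousLinearMap (Fin n → ℝ) (Matrix.toLinAlgEquiv' (lam⁻¹ • A))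
  have hT : ∀ (m : ℕ) v, (T ^ m) v = lam⁻¹ ^ m • (A ^ m).mulVec v := by
    intro m v
    rw [← map_pow, ← map_pow, smul_pow]
    exact Matrix.smul_mulVec (lam⁻¹ ^ m) (A ^ m) v
  have hb : b ∈ T.stableSubmodule :=
    ContinuousLinearMap.mem_stableSubmodule.2 (by simpa only [hT] using h)
  obtain ⟨μ, K, hμ, hμ1, hdecay⟩ := T.exists_norm_pow_apply_le_of_mem_stableSubmodule
  have hbound : ∀ m : ℕ, ‖(A ^ m).mulVec b‖ ≤ K * ‖b‖ * (lam * μ) ^ m := fun m =>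
    calc ‖(A ^ m).mulVec b‖ = lam ^ m * ‖(T ^ m) b‖ := by
          rw [hT, norm_smul, norm_pow, norm_inv, Real.norm_of_nonneg hlam.le,
            ← mul_assoc, ← mul_pow, mul_inv_cancel₀ hlam.ne', one_pow, one_mul]
      _ ≤ lam ^ m * (K * μ ^ m * ‖b‖) := by gcongr; exact hdecay b hb m
      _ = K * ‖b‖ * (lam * μ) ^ m := by ring
  calc localRho A b ≤ lam * μ :=
        limsup_rpow_one_div_le_of_le_mul_pow (fun m => norm_nonneg _) (by positivity) hbound
    _ < lam := mul_lt_of_lt_one_right hlam hμ1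

theorem stmt1 {n : ℕ} (A : Matrix (Fin n) (Fin n) ℝ) (b : Fin n → ℝ) (hb : b ≠ 0)
    (lam : ℝ) (hlam : 0 < lam)
    (h : Tendsto (fun m : ℕ => lam⁻¹ ^ m • (A ^ m).mulVec b) atTop (𝓝 0)) :
    localRho A b < lam :=
  stmt1_general A b lam hlam h
end

section
/- Let K be a proper cone in ℝⁿ (a closed convex cone with K ∩ (-K) = {0} and nonempty interior), let A be an n×n real matrix with AK ⊆ K, let b be a nonzero vector of K, and let λ > 0. If there exists x ∈ K with (λI - A)x = b, then the partial sums y_m = ∑_{j=0}^m λ^{-j-1} A^j b form a nondecreasing sequence in the partial order induced by K, bounded above by x, and hence converge. -/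
/-!
Telescoping with `b = λx - Ax` gives `y_m = x - λ^{-(m+1)} A^{m+1} x`, so `x - y_m ∈ K` because
`A` preserves `K`, and `y_m` is nondecreasing because every term `λ^{-j-1} A^j b` lies in `K`.
For convergence, a closed pointed cone in `ℝⁿ` is normal: `K ∩ {‖u‖ = 1}` is compact and disjoint
from `-K`, hence at positive distance from it, which gives `0 ≤_K u ≤_K v → ‖u‖ ≤ C ‖v‖`.
The sequence is then bounded, a subsequence converges to some `L`, closedness gives `y_m ≤_K L`,
and normality applied to `0 ≤_K L - y_m ≤_K L - y_{φ k}` upgrades this to convergence of `y`.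
-/

open Filter Matrix
open scoped Topology

/-- A proper cone in `ℝⁿ`: closed, convex, pointed, with nonempty interior. -/
structure IsProperCone {n : ℕ} (K : Set (Fin n → ℝ)) : Prop where
  convex : Convex ℝ K
  isClosed : IsClosed K
  smul_mem : ∀ c : ℝ, 0 ≤ c → ∀ x ∈ K, c • x ∈ K
  pointed : K ∩ (-K) = {0}
  full : (interior K).Nonempty

theorem Matrix.sum_range_inv_pow_smul_pow_mulVec {R ι : Type*} [Field R] [Fintype ι]
    [DecidableEq ι] (A : Matrix ι ι R) {lam : R} (hlam : lam ≠ 0) {x b : ι → R}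
    (hsol : (lam • (1 : Matrix ι ι R) - A) *ᵥ x = b) (m : ℕ) :
    ∑ j ∈ Finset.range m, lam⁻¹ ^ (j + 1) • (A ^ j) *ᵥ b = x - lam⁻¹ ^ m • (A ^ m) *ᵥ x := by
  induction m with
  | zero => simp
  | succ m ih =>
    have hterm : lam⁻¹ ^ (m + 1) • (A ^ m) *ᵥ b =
        lam⁻¹ ^ m • (A ^ m) *ᵥ x - lam⁻¹ ^ (m + 1) • (A ^ (m + 1)) *ᵥ x := by
      rw [← hsol, sub_mulVec, smul_mulVec, one_mulVec, mulVec_sub, mulVec_smul, pow_succ A,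
        ← mulVec_mulVec, smul_sub, smul_smul, pow_succ lam⁻¹, mul_assoc, inv_mul_cancel₀ hlam,
        mul_one]
    rw [Finset.sum_range_succ, ih, hterm]
    abel

theorem Matrix.pow_mulVec_mem {R ι : Type*} [CommSemiring R] [Fintype ι] [DecidableEq ι]
    {A : Matrix ι ι R} {K : Set (ι → R)} (hA : ∀ v ∈ K, A *ᵥ v ∈ K) (j : ℕ) {v : ι → R}
    (hv : v ∈ K) : (A ^ j) *ᵥ v ∈ K := by
  induction j with
  | zero => simpa using hv
  | succ j ih => rw [pow_succ', ← mulVec_mulVec]; exact hA _ ih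

namespace IsProperCone

variable {n : ℕ} {K : Set (Fin n → ℝ)}

theorem zero_mem (hK : IsProperCone K) : (0 : Fin n → ℝ) ∈ K :=
  (hK.pointed.symm ▸ Set.mem_singleton 0 : (0 : Fin n → ℝ) ∈ K ∩ -K).1

theorem add_mem (hK : IsProperCone K) {u v : Fin n → ℝ} (hu : u ∈ K) (hv : v ∈ K) :
    u + v ∈ K := by
  have hmid := hK.convex hu hv (by norm_num : (0 : ℝ) ≤ 1 / 2) (by norm_num : (0 : ℝ) ≤ 1 / 2)
    (by norm_num)
  convert hK.smul_mem 2 (by norm_num) _ hmid using 1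
  rw [smul_add, smul_smul, smul_smul]
  norm_num

theorem sum_mem (hK : IsProperCone K) {ι : Type*} (s : Finset ι) {f : ι → Fin n → ℝ}
    (hf : ∀ i ∈ s, f i ∈ K) : ∑ i ∈ s, f i ∈ K :=
  Finset.sum_induction f (· ∈ K) (fun _ _ => hK.add_mem) hK.zero_mem hf

theorem exists_norm_le_mul_norm (hK : IsProperCone K) :
    ∃ C : ℝ, 0 < C ∧ ∀ u v : Fin n → ℝ, u ∈ K → v - u ∈ K → ‖u‖ ≤ C * ‖v‖ := by
  have hdisj : Disjoint (K ∩ Metric.sphere 0 1) (-K) := by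
    refine Set.disjoint_left.2 fun s ⟨hsK, hs1⟩ hsneg => ?_
    have hs0 : s ∈ K ∩ -K := ⟨hsK, hsneg⟩
    rw [hK.pointed, Set.mem_singleton_iff] at hs0
    simp [hs0] at hs1
  obtain ⟨r, hr, hsep⟩ := Metric.exists_pos_forall_lt_edist
    ((isCompact_sphere 0 1).inter_left hK.isClosed) hK.isClosed.neg hdisj
  refine ⟨(r : ℝ)⁻¹, by positivity, fun u v hu hvu => ?_⟩
  rcases eq_or_ne u 0 with rfl | hu0
  · rw [norm_zero]; positivity
  have hupos : 0 < ‖u‖ := norm_pos_iff.2 hu0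
  have hsphere : ‖u‖⁻¹ • u ∈ K ∩ Metric.sphere 0 1 :=
    ⟨hK.smul_mem _ (by positivity) _ hu, by simp [norm_smul, hupos.ne']⟩
  have hneg : -(‖u‖⁻¹ • (v - u)) ∈ -K := by
    rw [Set.neg_mem_neg]; exact hK.smul_mem _ (by positivity) _ hvu
  have hdist : (r : ℝ) < ‖v‖ / ‖u‖ := by
    have := hsep _ hsphere _ hneg
    rw [edist_nndist, ENNReal.coe_lt_coe, ← NNReal.coe_lt_coe, coe_nndist, dist_eq_norm,
      sub_neg_eq_add, ← smul_add, add_sub_cancel, norm_smul, norm_inv, norm_norm,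
      inv_mul_eq_div] at this
    exact this
  rw [lt_div_iff₀ hupos] at hdist
  rw [inv_mul_eq_div, le_div_iff₀ (by positivity)]
  linarith

theorem exists_tendsto_of_monotone_of_bddAbove (hK : IsProperCone K) {y : ℕ → Fin n → ℝ}
    {x : Fin n → ℝ} (hmono : ∀ m₁ m₂, m₁ ≤ m₂ → y m₂ - y m₁ ∈ K) (hbdd : ∀ m, x - y m ∈ K) :
    ∃ L, Tendsto y atTop (𝓝 L) := by
  obtain ⟨C, hC, hnormal⟩ := hK.exists_norm_le_mul_norm
  have hball : ∀ m, y m ∈ Metric.closedBall (y 0) (C * ‖x - y 0‖) := fun m => by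
    rw [Metric.mem_closedBall, dist_eq_norm]
    exact hnormal _ _ (hmono 0 m m.zero_le) (by simpa using hbdd m)
  obtain ⟨L, -, φ, hφ, hyL⟩ := tendsto_subseq_of_bounded Metric.isBounded_closedBall hball
  have hle : ∀ m, L - y m ∈ K := fun m =>
    hK.isClosed.mem_of_tendsto (hyL.sub_const (y m))
      ((hφ.tendsto_atTop.eventually_ge_atTop m).mono fun k hk => hmono m (φ k) hk)
  refine ⟨L, Metric.tendsto_atTop.2 fun ε hε => ?_⟩
  obtain ⟨k, hk⟩ := Metric.tendsto_atTop.1 hyL (ε / C) (by positivity)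
  refine ⟨φ k, fun m hm => ?_⟩
  calc dist (y m) L = ‖L - y m‖ := dist_eq_norm' _ _
    _ ≤ C * ‖L - y (φ k)‖ := hnormal _ _ (hle m) (by simpa using hmono _ _ hm)
    _ < C * (ε / C) := by gcongr; rw [← dist_eq_norm']; exact hk k le_rfl
    _ = ε := mul_div_cancel₀ ε hC.ne'

end IsProperCone

theorem stmt2_general {n : ℕ} {K : Set (Fin n → ℝ)} (hK : IsProperCone K)
    (A : Matrix (Fin n) (Fin n) ℝ) (hA : ∀ v ∈ K, A.mulVec v ∈ K)
    (b : Fin n → ℝ) (hb : b ∈ K) (lam : ℝ) (hlam : 0 < lam)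
    (x : Fin n → ℝ) (hx : x ∈ K)
    (hsol : (lam • (1 : Matrix (Fin n) (Fin n) ℝ) - A).mulVec x = b) :
    (∀ m₁ m₂ : ℕ, m₁ ≤ m₂ →
      (∑ j ∈ Finset.range (m₂ + 1), lam⁻¹ ^ (j + 1) • (A ^ j).mulVec b) -
        (∑ j ∈ Finset.range (m₁ + 1), lam⁻¹ ^ (j + 1) • (A ^ j).mulVec b) ∈ K) ∧
    (∀ m : ℕ, x - ∑ j ∈ Finset.range (m + 1), lam⁻¹ ^ (j + 1) • (A ^ j).mulVec b ∈ K) ∧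
    (∃ L : Fin n → ℝ,
      Tendsto (fun m : ℕ => ∑ j ∈ Finset.range (m + 1), lam⁻¹ ^ (j + 1) • (A ^ j).mulVec b)
        atTop (𝓝 L)) := by
  set y : ℕ → Fin n → ℝ :=
    fun m => ∑ j ∈ Finset.range (m + 1), lam⁻¹ ^ (j + 1) • (A ^ j).mulVec b
  have hmono : ∀ m₁ m₂ : ℕ, m₁ ≤ m₂ → y m₂ - y m₁ ∈ K := fun m₁ m₂ hm => by
    rw [← Finset.sum_Ico_eq_sub _ (by omega)]
    exact hK.sum_mem _ fun j _ => hK.smul_mem _ (by positivity) _ (pow_mulVec_mem hA j hb)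
  have hbdd : ∀ m, x - y m ∈ K := fun m => by
    rw [show y m = _ from sum_range_inv_pow_smul_pow_mulVec A hlam.ne' hsol (m + 1),
      sub_sub_cancel]
    exact hK.smul_mem _ (by positivity) _ (pow_mulVec_mem hA _ hx)
  exact ⟨hmono, hbdd, hK.exists_tendsto_of_monotone_of_bddAbove hmono hbdd⟩

theorem stmt2 {n : ℕ} {K : Set (Fin n → ℝ)} (hK : IsProperCone K)
    (A : Matrix (Fin n) (Fin n) ℝ) (hA : ∀ v ∈ K, A.mulVec v ∈ K)
    (b : Fin n → ℝ) (hb : b ∈ K) (hb0 : b ≠ 0) (lam : ℝ) (hlam : 0 < lam)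
    (x : Fin n → ℝ) (hx : x ∈ K)
    (hsol : (lam • (1 : Matrix (Fin n) (Fin n) ℝ) - A).mulVec x = b) :
    (∀ m₁ m₂ : ℕ, m₁ ≤ m₂ →
      (∑ j ∈ Finset.range (m₂ + 1), lam⁻¹ ^ (j + 1) • (A ^ j).mulVec b) -
        (∑ j ∈ Finset.range (m₁ + 1), lam⁻¹ ^ (j + 1) • (A ^ j).mulVec b) ∈ K) ∧
    (∀ m : ℕ, x - ∑ j ∈ Finset.range (m + 1), lam⁻¹ ^ (j + 1) • (A ^ j).mulVec b ∈ K) ∧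
    (∃ L : Fin n → ℝ,
      Tendsto (fun m : ℕ => ∑ j ∈ Finset.range (m + 1), lam⁻¹ ^ (j + 1) • (A ^ j).mulVec b)
        atTop (𝓝 L)) :=
  stmt2_general hK A hA b hb lam hlam x hx hsol
end

section
/- Let K be a proper cone in ℝⁿ, A an n×n real matrix with AK ⊆ K, b a nonzero vector of K, and λ > 0. Then there exists x ∈ K with (λI - A)x = b if and only if the local spectral radius ρ_b(A) < λ. In that case x⁰ = ∑_{j=0}^∞ λ^{-j-1} A^j b is a solution. -/
open Filter Matrix
open scoped Topology

/-!
If `ρ_b(A) < λ`, the root test makes the Neumann series `∑ λ^{-j-1} A^j b` converge; its terms lie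
in `K`, hence so does its sum, which solves `(λI - A)x = b` by telescoping.

Conversely, let `x ∈ K` solve `(λI - A)x = b` and put `T = λ⁻¹A`. Then
`λx - ∑_{j<m} T^j b = λ T^m x ∈ K`, so the partial sums of the vectors `T^j b ∈ K` stay below `λx`
in the cone order. A closed salient cone in finite dimension carries a functional `φ ≥ ε‖·‖`, hence
`∑ ‖T^j b‖ < ∞` and `T^m b → 0`. On the finite-dimensional `T`-invariant Krylov subspace spanned by
the `T^j b`, pointwise convergence `T^m → 0` is convergence in operator norm, so some power of `T`
is a contraction there and `‖T^m b‖` decays geometrically; this gives the strict `ρ_b(A) < λ`.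
-/

open Finset

section RootTest

variable {u : ℕ → ℝ}

lemma tendsto_rpow_one_div_mul_const {D : ℝ} (hD : 0 < D) (q : ℝ) :
    Tendsto (fun m : ℕ => D ^ (1 / m : ℝ) * q) atTop (𝓝 q) := by
  simpa using ((tendsto_const_nhds (x := D)).rpow tendsto_one_div_atTop_nhds_zero_nat
    (Or.inl hD.ne')).mul_const q

lemma eventually_rpow_one_div_le_of_le_geometric (hu : ∀ m, 0 ≤ u m) {D q : ℝ} (hD : 0 ≤ D)
    (hq : 0 ≤ q) (h : ∀ᶠ m in atTop, u m ≤ D * q ^ m) :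
    ∀ᶠ m : ℕ in atTop, u m ^ (1 / m : ℝ) ≤ D ^ (1 / m : ℝ) * q := by
  filter_upwards [h, eventually_ne_atTop 0] with m hm hm0
  calc u m ^ (1 / m : ℝ) ≤ (D * q ^ m) ^ (1 / m : ℝ) := by gcongr; exact hu m
    _ = D ^ (1 / m : ℝ) * q := by
      rw [Real.mul_rpow hD (by positivity), one_div, Real.pow_rpow_inv_natCast hq hm0]

lemma isBoundedUnder_rpow_one_div_of_le_geometric (hu : ∀ m, 0 ≤ u m) {D q : ℝ} (hD : 0 < D)
    (hq : 0 ≤ q) (h : ∀ᶠ m in atTop, u m ≤ D * q ^ m) :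
    IsBoundedUnder (· ≤ ·) atTop (fun m : ℕ => u m ^ (1 / m : ℝ)) :=
  (tendsto_rpow_one_div_mul_const hD q).isBoundedUnder_le.mono_le
    (eventually_rpow_one_div_le_of_le_geometric hu hD.le hq h)

lemma limsup_rpow_one_div_le_of_le_geometric (hu : ∀ m, 0 ≤ u m) {D q : ℝ} (hD : 0 < D)
    (hq : 0 ≤ q) (h : ∀ᶠ m in atTop, u m ≤ D * q ^ m) :
    limsup (fun m : ℕ => u m ^ (1 / m : ℝ)) atTop ≤ q := by
  have hlim := tendsto_rpow_one_div_mul_const hD q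
  calc limsup (fun m : ℕ => u m ^ (1 / m : ℝ)) atTop
      ≤ limsup (fun m : ℕ => D ^ (1 / m : ℝ) * q) atTop :=
        limsup_le_limsup (eventually_rpow_one_div_le_of_le_geometric hu hD.le hq h)
          (isCoboundedUnder_le_of_le atTop fun m => Real.rpow_nonneg (hu m) _)
          hlim.isBoundedUnder_le
    _ = q := hlim.limsup_eq

lemma eventually_le_pow_of_limsup_rpow_one_div_lt (hu : ∀ m, 0 ≤ u m)
    (hbdd : IsBoundedUnder (· ≤ ·) atTop (fun m : ℕ => u m ^ (1 / m : ℝ))) {r : ℝ}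
    (h : limsup (fun m : ℕ => u m ^ (1 / m : ℝ)) atTop < r) :
    ∀ᶠ m in atTop, u m ≤ r ^ m := by
  filter_upwards [eventually_lt_of_limsup_lt h hbdd, eventually_ne_atTop 0] with m hm hm0
  calc u m = (u m ^ (1 / m : ℝ)) ^ m := by
        rw [one_div, Real.rpow_inv_natCast_pow (hu m) hm0]
    _ ≤ r ^ m := by gcongr; exact Real.rpow_nonneg (hu m) _

end RootTest

attribute [local instance] Matrix.linftyOpNormedRing in
lemma Matrix.isBoundedUnder_norm_pow_mulVec_rpow {ι : Type*} [Fintype ι] [DecidableEq ι]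
    (A : Matrix ι ι ℝ) (b : ι → ℝ) :
    IsBoundedUnder (· ≤ ·) atTop (fun m : ℕ => ‖(A ^ m).mulVec b‖ ^ (1 / m : ℝ)) := by
  refine isBoundedUnder_rpow_one_div_of_le_geometric (fun m => norm_nonneg _)
    (by positivity : 0 < ‖b‖ + 1) (norm_nonneg A) ?_
  filter_upwards [eventually_gt_atTop 0] with m hm
  calc ‖(A ^ m).mulVec b‖ ≤ ‖A ^ m‖ * ‖b‖ := Matrix.linfty_opNorm_mulVec _ _
    _ ≤ ‖A‖ ^ m * (‖b‖ + 1) := by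
      gcongr
      exacts [norm_pow_le' A hm, le_add_of_nonneg_right zero_le_one]
    _ = (‖b‖ + 1) * ‖A‖ ^ m := mul_comm _ _

lemma localRho_le_of_norm_pow_mulVec_le {n : ℕ} {A : Matrix (Fin n) (Fin n) ℝ} {b : Fin n → ℝ}
    {D q : ℝ} (hD : 0 < D) (hq : 0 ≤ q) (h : ∀ m, ‖(A ^ m).mulVec b‖ ≤ D * q ^ m) :
    localRho A b ≤ q :=
  limsup_rpow_one_div_le_of_le_geometric (fun _ => norm_nonneg _) hD hq (.of_forall h)

lemma eventually_norm_pow_mulVec_le_of_localRho_lt {n : ℕ} {A : Matrix (Fin n) (Fin n) ℝ}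
    {b : Fin n → ℝ} {r : ℝ} (h : localRho A b < r) :
    ∀ᶠ m in atTop, ‖(A ^ m).mulVec b‖ ≤ r ^ m :=
  eventually_le_pow_of_limsup_rpow_one_div_lt (fun _ => norm_nonneg _)
    (A.isBoundedUnder_norm_pow_mulVec_rpow b) h

namespace Module.End

lemma mapsTo_pow {R M : Type*} [Semiring R] [AddCommMonoid M] [Module R M] {f : Module.End R M}
    {s : Set M} (hf : Set.MapsTo f s s) (m : ℕ) : Set.MapsTo (f ^ m) s s := by
  rw [Module.End.coe_pow]
  exact hf.iterate m

theorem smul_sub_apply_eq_of_hasSum {R M : Type*} [Field R] [AddCommGroup M] [Module R M]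
    [TopologicalSpace M] [IsTopologicalAddGroup M] [ContinuousConstSMul R M] [T2Space M]
    {f : Module.End R M} (hf : Continuous f) {t : R} (ht : t ≠ 0) {b x : M}
    (hx : HasSum (fun j => t⁻¹ ^ (j + 1) • (f ^ j) b) x) : t • x - f x = b := by
  set c : ℕ → M := fun j => t⁻¹ ^ (j + 1) • (f ^ j) b
  have hfc : ∀ j, f (c j) = t • c (j + 1) := fun j => by
    simp only [c, map_smul, smul_smul, ← Module.End.mul_apply, ← pow_succ']
    rw [pow_succ _ (j + 1), mul_left_comm, mul_inv_cancel₀ ht, mul_one]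
  have hshift : HasSum (fun j => t • c (j + 1)) (t • (x - c 0)) := by
    simpa using ((hasSum_nat_add_iff' 1).mpr hx).const_smul t
  have hfx : f x = t • (x - c 0) :=
    (hx.map f hf).unique (by simpa only [Function.comp_def, hfc] using hshift)
  rw [hfx, smul_sub, sub_sub_cancel]
  simp [c, smul_smul, mul_inv_cancel₀ ht]

theorem smul_sub_sum_pow_apply {R M : Type*} [Field R] [AddCommGroup M] [Module R M]
    {f : Module.End R M} {t : R} (ht : t ≠ 0) {b x : M} (hx : t • x - f x = b) (m : ℕ) :
    t • x - ∑ j ∈ Finset.range m, ((t⁻¹ • f) ^ j) b = t • ((t⁻¹ • f) ^ m) x := by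
  have hb : b = t • (1 - t⁻¹ • f) x := by
    rw [← hx, LinearMap.sub_apply, smul_sub, LinearMap.smul_apply, smul_smul,
      mul_inv_cancel₀ ht, one_smul, Module.End.one_apply]
  rw [hb, ← LinearMap.sum_apply, map_smul, ← Module.End.mul_apply, geom_sum_mul_neg,
    LinearMap.sub_apply, Module.End.one_apply, smul_sub, sub_sub_cancel]

section Krylov

variable {R M : Type*} [Semiring R] [AddCommMonoid M] [Module R M]

def krylovSubspace (f : Module.End R M) (v : M) : Submodule R M :=
  Submodule.span R (Set.range fun j : ℕ => (f ^ j) v)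

variable {f : Module.End R M} {v w : M}

lemma pow_apply_mem_krylovSubspace (j : ℕ) : (f ^ j) v ∈ krylovSubspace f v :=
  Submodule.subset_span ⟨j, rfl⟩

lemma apply_mem_krylovSubspace (hw : w ∈ krylovSubspace f v) : f w ∈ krylovSubspace f v := by
  suffices krylovSubspace f v ≤ (krylovSubspace f v).comap f from this hw
  refine Submodule.span_le.mpr ?_
  rintro _ ⟨j, rfl⟩
  rw [SetLike.mem_coe, Submodule.mem_comap, ← Module.End.mul_apply, ← pow_succ']
  exact pow_apply_mem_krylovSubspace (j + 1)

lemma tendsto_pow_apply_of_mem_krylovSubspace [TopologicalSpace M] [ContinuousAdd M]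
    [ContinuousConstSMul R M] (h : Tendsto (fun m => (f ^ m) v) atTop (𝓝 0))
    (hw : w ∈ krylovSubspace f v) : Tendsto (fun m => (f ^ m) w) atTop (𝓝 0) := by
  induction hw using Submodule.span_induction with
  | mem x hx =>
    obtain ⟨j, rfl⟩ := hx
    simpa only [Function.comp_def, ← Module.End.mul_apply, ← pow_add] using
      h.comp (tendsto_add_atTop_nat j)
  | zero => simpa using tendsto_const_nhds
  | add x y _ _ hx hy => simpa using hx.add hy
  | smul a x _ hx => simpa using hx.const_smul a

end Krylov

end Module.End

lemma ContinuousLinearMap.tendsto_norm_of_tendsto_apply {𝕜 E F α : Type*}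
    [NontriviallyNormedField 𝕜] [CompleteSpace 𝕜] [NormedAddCommGroup E] [NormedSpace 𝕜 E]
    [FiniteDimensional 𝕜 E] [NormedAddCommGroup F] [NormedSpace 𝕜 F] {l : Filter α}
    {u : α → E →L[𝕜] F}
    (h : ∀ x, Tendsto (fun a => u a x) l (𝓝 0)) : Tendsto (fun a => ‖u a‖) l (𝓝 0) := by
  obtain ⟨C, -, hC⟩ := (Module.finBasis 𝕜 E).exists_opNorm_le (F := F)
  have hsum : Tendsto (fun a => C * ∑ i, ‖u a (Module.finBasis 𝕜 E i)‖) l (𝓝 0) := by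
    simpa using (tendsto_finsetSum _ fun i _ => (h _).norm).const_mul C
  refine squeeze_zero (fun a => norm_nonneg _) (fun a => hC (by positivity) fun i => ?_) hsum
  exact Finset.single_le_sum (f := fun i => ‖u a (Module.finBasis 𝕜 E i)‖)
    (fun _ _ => norm_nonneg _) (Finset.mem_univ i)

lemma exists_norm_pow_le_mul_pow_s3 {R : Type*} [SeminormedRing R] (a : R) {M : ℕ} (hM : M ≠ 0)
    {c : ℝ} (hc : 0 < c) (haM : ‖a ^ M‖ ≤ c ^ M) : ∃ D, 0 < D ∧ ∀ m, ‖a ^ m‖ ≤ D * c ^ m := by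
  set D := 1 + ∑ r ∈ Finset.range M, ‖a ^ r‖ / c ^ r
  have hD : ∀ r < M, ‖a ^ r‖ ≤ D * c ^ r := fun r hr => by
    rw [← div_le_iff₀ (by positivity)]
    refine (Finset.single_le_sum (f := fun r => ‖a ^ r‖ / c ^ r) (fun _ _ => by positivity)
      (Finset.mem_range.mpr hr)).trans (le_add_of_nonneg_left zero_le_one)
  refine ⟨D, by positivity, fun m => ?_⟩
  induction m using Nat.strong_induction_on with
  | _ m ih =>
    rcases lt_or_ge m M with hm | hm
    · exact hD m hm
    · obtain ⟨k, rfl⟩ := Nat.exists_eq_add_of_le' hm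
      calc ‖a ^ (k + M)‖ ≤ ‖a ^ k‖ * ‖a ^ M‖ := by rw [pow_add]; exact norm_mul_le _ _
        _ ≤ D * c ^ k * c ^ M := by gcongr; exact ih k (by omega)
        _ = D * c ^ (k + M) := by ring

theorem Module.End.exists_norm_pow_apply_le_geometric {𝕜 E : Type*} [NontriviallyNormedField 𝕜]
    [CompleteSpace 𝕜] [NormedAddCommGroup E] [NormedSpace 𝕜 E] [FiniteDimensional 𝕜 E]
    {f : Module.End 𝕜 E} {v : E} (h : Tendsto (fun m => (f ^ m) v) atTop (𝓝 0)) :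
    ∃ D q : ℝ, 0 < D ∧ 0 ≤ q ∧ q < 1 ∧ ∀ m, ‖(f ^ m) v‖ ≤ D * q ^ m := by
  set W := krylovSubspace f v
  let G : W →L[𝕜] W :=
    LinearMap.toContinuousLinearMap (f.restrict fun _ => apply_mem_krylovSubspace)
  have hG : ∀ m (w : W), ((G ^ m) w : E) = (f ^ m) w := fun m w => by
    rw [← ContinuousLinearMap.coe_coe, ContinuousLinearMap.toLinearMap_pow,
      LinearMap.coe_toContinuousLinearMap, Module.End.pow_restrict, LinearMap.restrict_apply]
  have hGto : Tendsto (fun m => ‖G ^ m‖) atTop (𝓝 0) :=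
    ContinuousLinearMap.tendsto_norm_of_tendsto_apply fun w => tendsto_subtype_rng.mpr <| by
      simpa only [hG, Submodule.coe_zero] using tendsto_pow_apply_of_mem_krylovSubspace h w.2
  obtain ⟨M, hGM, hM⟩ := ((hGto.eventually_le_const (by norm_num : (0 : ℝ) < 1 / 2)).and
    (eventually_ne_atTop 0)).exists
  set q : ℝ := (1 / 2) ^ (M : ℝ)⁻¹
  have hqM : q ^ M = 1 / 2 := Real.rpow_inv_natCast_pow (by norm_num) hM
  obtain ⟨D, hD, hDG⟩ := exists_norm_pow_le_mul_pow_s3 G hM (by positivity) (hGM.trans hqM.ge)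
  refine ⟨D * (‖v‖ + 1), q, by positivity, by positivity,
    Real.rpow_lt_one (by norm_num) (by norm_num) (by positivity), fun m => ?_⟩
  have hv : v ∈ W := by simpa using pow_apply_mem_krylovSubspace (f := f) (v := v) 0
  calc ‖(f ^ m) v‖ = ‖(G ^ m) ⟨v, hv⟩‖ := by rw [Submodule.coe_norm, hG]
    _ ≤ ‖G ^ m‖ * ‖v‖ := (G ^ m).le_opNorm _
    _ ≤ D * q ^ m * (‖v‖ + 1) := by gcongr; exacts [hDG m, le_add_of_nonneg_right zero_le_one]
    _ = D * (‖v‖ + 1) * q ^ m := by ring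

lemma summable_inv_pow_succ_smul {E : Type*} [NormedAddCommGroup E] [NormedSpace ℝ E]
    [CompleteSpace E] {u : ℕ → E} {r t : ℝ} (hr : 0 ≤ r) (hrt : r < t)
    (h : ∀ᶠ j in atTop, ‖u j‖ ≤ r ^ j) : Summable fun j => t⁻¹ ^ (j + 1) • u j := by
  have ht : 0 < t := hr.trans_lt hrt
  refine .of_norm_bounded_eventually_nat (g := fun j => t⁻¹ * (r / t) ^ j)
    ((summable_geometric_of_lt_one (by positivity) ((div_lt_one ht).mpr hrt)).mul_left _) ?_
  filter_upwards [h] with j hj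
  calc ‖t⁻¹ ^ (j + 1) • u j‖ = t⁻¹ ^ (j + 1) * ‖u j‖ := by
        rw [norm_smul, norm_pow, norm_inv, Real.norm_of_nonneg ht.le]
    _ ≤ t⁻¹ ^ (j + 1) * r ^ j := by gcongr
    _ = t⁻¹ * (r / t) ^ j := by rw [div_eq_mul_inv, mul_pow, pow_succ]; ring

/-- Mathlib's `ProperCone` is only a closed convex cone; salience is kept as a separate fact,
`IsProperCone.salient`. -/
def IsProperCone.toProperCone {n : ℕ} {K : Set (Fin n → ℝ)} (hK : IsProperCone K) :
    ProperCone ℝ (Fin n → ℝ) where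
  carrier := K
  add_mem' {x y} hx hy := by
    have hmid := hK.convex hx hy (by norm_num : (0 : ℝ) ≤ 1 / 2) (by norm_num : (0 : ℝ) ≤ 1 / 2)
      (by norm_num)
    simpa [smul_add, smul_smul] using hK.smul_mem 2 zero_le_two _ hmid
  zero_mem' := (hK.pointed.symm ▸ Set.mem_singleton 0 : (0 : Fin n → ℝ) ∈ K ∩ -K).1
  smul_mem' c x hx := hK.smul_mem c c.2 x hx
  isClosed' := hK.isClosed

lemma IsProperCone.salient {n : ℕ} {K : Set (Fin n → ℝ)} (hK : IsProperCone K) :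
    ((hK.toProperCone : PointedCone ℝ (Fin n → ℝ)) : ConvexCone ℝ (Fin n → ℝ)).Salient :=
  (PointedCone.salient_iff_inter_neg_eq_singleton _).mpr hK.pointed

namespace ProperCone

variable {E : Type*} [NormedAddCommGroup E] [NormedSpace ℝ E] {C : ProperCone ℝ E}

lemma exists_nonneg_pos_of_salient (hC : ((C : PointedCone ℝ E) : ConvexCone ℝ E).Salient)
    {x : E} (hx : x ∈ C) (hx0 : x ≠ 0) : ∃ f : StrongDual ℝ E, (∀ y ∈ C, 0 ≤ f y) ∧ 0 < f x := by
  obtain ⟨f, hfC, hfx⟩ := C.hyperplane_separation_point (hC x hx hx0)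
  exact ⟨f, hfC, by simpa using hfx⟩

lemma exists_mul_norm_le_of_salient [FiniteDimensional ℝ E]
    (hC : ((C : PointedCone ℝ E) : ConvexCone ℝ E).Salient) :
    ∃ φ : StrongDual ℝ E, ∃ ε > 0, ∀ x ∈ C, ε * ‖x‖ ≤ φ x := by
  set S := (C : Set E) ∩ Metric.sphere 0 1
  have hS : IsCompact S := (isCompact_sphere 0 1).inter_left C.isClosed
  have hpos : ∀ s : S, ∃ f : StrongDual ℝ E, (∀ y ∈ C, 0 ≤ f y) ∧ 0 < f s := fun s =>
    exists_nonneg_pos_of_salient hC s.2.1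
      (ne_zero_of_mem_unit_sphere (⟨s, s.2.2⟩ : Metric.sphere (0 : E) 1))
  choose f hfC hfs using hpos
  obtain ⟨t, ht⟩ := hS.elim_finite_subcover (fun s => {y | 0 < f s y})
    (fun s => isOpen_lt continuous_const (f s).continuous)
    (fun s hs => Set.mem_iUnion.mpr ⟨⟨s, hs⟩, hfs _⟩)
  set φ := ∑ s ∈ t, f s
  have hφC : ∀ y ∈ C, 0 ≤ φ y := fun y hy => by
    simpa [φ] using Finset.sum_nonneg fun s _ => hfC s y hy
  have hφS : ∀ y ∈ S, 0 < φ y := fun y hy => by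
    obtain ⟨s, hst, hsy⟩ := Set.mem_iUnion₂.mp (ht hy)
    simpa [φ] using Finset.sum_pos' (fun s _ => hfC s y hy.1) ⟨s, hst, hsy⟩
  obtain ⟨ε, hε, hεS⟩ := hS.exists_forall_le' φ.continuous.continuousOn hφS
  refine ⟨φ, ε, hε, fun x hx => ?_⟩
  rcases eq_or_ne x 0 with rfl | hx0
  · simp
  have hxS : ‖x‖⁻¹ • x ∈ S :=
    ⟨C.smul_mem hx (by positivity), by simp [norm_smul, inv_mul_cancel₀ (norm_ne_zero_iff.mpr hx0)]⟩
  have := hεS _ hxS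
  rw [map_smul, smul_eq_mul, le_inv_mul_iff₀ (norm_pos_iff.mpr hx0)] at this
  linarith

lemma summable_norm_of_sub_sum_mem [FiniteDimensional ℝ E]
    (hC : ((C : PointedCone ℝ E) : ConvexCone ℝ E).Salient) {g : ℕ → E} {y : E}
    (hg : ∀ j, g j ∈ C) (hy : ∀ m, y - ∑ j ∈ range m, g j ∈ C) : Summable fun j => ‖g j‖ := by
  obtain ⟨φ, ε, hε, hφ⟩ := exists_mul_norm_le_of_salient hC
  refine summable_of_sum_range_le (c := φ y / ε) (fun _ => norm_nonneg _) fun m => ?_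
  have hsub : 0 ≤ φ (y - ∑ j ∈ range m, g j) :=
    (mul_nonneg hε.le (norm_nonneg _)).trans (hφ _ (hy m))
  rw [le_div_iff₀' hε, mul_sum]
  calc ∑ j ∈ range m, ε * ‖g j‖ ≤ ∑ j ∈ range m, φ (g j) := sum_le_sum fun j _ => hφ _ (hg j)
    _ = φ (∑ j ∈ range m, g j) := (map_sum φ g _).symm
    _ ≤ φ y := by rw [map_sub] at hsub; linarith

theorem exists_norm_pow_apply_le_geometric_of_smul_sub_apply_eq [FiniteDimensional ℝ E]
    (hC : ((C : PointedCone ℝ E) : ConvexCone ℝ E).Salient) {f : Module.End ℝ E}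
    (hf : Set.MapsTo f C C) {t : ℝ} (ht : 0 < t) {b x : E} (hb : b ∈ C) (hx : x ∈ C)
    (hxb : t • x - f x = b) :
    ∃ D r : ℝ, 0 < D ∧ 0 ≤ r ∧ r < t ∧ ∀ m, ‖(f ^ m) b‖ ≤ D * r ^ m := by
  set T := t⁻¹ • f
  have hT : ∀ m : ℕ, Set.MapsTo ⇑(T ^ m) C C :=
    Module.End.mapsTo_pow fun y hy => C.smul_mem (hf hy) (by positivity)
  have hsum : Summable fun j => ‖(T ^ j) b‖ :=
    summable_norm_of_sub_sum_mem hC (fun j => hT j hb) fun m => by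
      rw [Module.End.smul_sub_sum_pow_apply ht.ne' hxb]
      exact C.smul_mem (hT m hx) ht.le
  obtain ⟨D, q, hD, hq, hq1, hDq⟩ := Module.End.exists_norm_pow_apply_le_geometric
    (tendsto_zero_iff_norm_tendsto_zero.mpr hsum.tendsto_atTop_zero)
  refine ⟨D, t * q, hD, by positivity, mul_lt_of_lt_one_right ht hq1, fun m => ?_⟩
  have hfT : (f ^ m) b = t ^ m • (T ^ m) b := by
    rw [smul_pow, LinearMap.smul_apply, smul_smul, ← mul_pow, mul_inv_cancel₀ ht.ne', one_pow,
      one_smul]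
  calc ‖(f ^ m) b‖ = t ^ m * ‖(T ^ m) b‖ := by
        rw [hfT, norm_smul, norm_pow, Real.norm_of_nonneg ht.le]
    _ ≤ t ^ m * (D * q ^ m) := by gcongr; exact hDq m
    _ = D * (t * q) ^ m := by ring

theorem exists_mem_hasSum_inv_pow_smul_pow_apply [CompleteSpace E] {f : Module.End ℝ E}
    (hf : Set.MapsTo f C C) (hfc : Continuous f) {b : E} (hb : b ∈ C) {r t : ℝ} (hr : 0 ≤ r)
    (hrt : r < t) (h : ∀ᶠ m in atTop, ‖(f ^ m) b‖ ≤ r ^ m) :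
    ∃ x ∈ C, HasSum (fun j => t⁻¹ ^ (j + 1) • (f ^ j) b) x ∧ t • x - f x = b := by
  have ht : 0 < t := hr.trans_lt hrt
  have hsum := (summable_inv_pow_succ_smul hr hrt h).hasSum
  refine ⟨_, C.isClosed.mem_of_tendsto hsum (.of_forall fun s => sum_mem fun j _ =>
    C.smul_mem (Module.End.mapsTo_pow hf j hb) (by positivity)), hsum, ?_⟩
  exact Module.End.smul_sub_apply_eq_of_hasSum hfc ht.ne' hsum

end ProperCone

theorem stmt3_general {n : ℕ} {K : Set (Fin n → ℝ)} (hK : IsProperCone K)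
    (A : Matrix (Fin n) (Fin n) ℝ) (hA : ∀ v ∈ K, A.mulVec v ∈ K)
    (b : Fin n → ℝ) (hb : b ∈ K) (lam : ℝ) (hlam : 0 < lam) :
    ((∃ x ∈ K, (lam • (1 : Matrix (Fin n) (Fin n) ℝ) - A).mulVec x = b) ↔
      localRho A b < lam) ∧
    (localRho A b < lam →
      ∃ x0 : Fin n → ℝ,
        Tendsto (fun m : ℕ => ∑ j ∈ Finset.range (m + 1), lam⁻¹ ^ (j + 1) • (A ^ j).mulVec b)
          atTop (𝓝 x0) ∧
        x0 ∈ K ∧ (lam • (1 : Matrix (Fin n) (Fin n) ℝ) - A).mulVec x0 = b) := by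
  set C := hK.toProperCone
  set f := Matrix.toLin' A
  have hfC : Set.MapsTo f C C := fun v hv => hA v hv
  have hf (m : ℕ) (v : Fin n → ℝ) : (f ^ m) v = (A ^ m).mulVec v := by
    rw [← Matrix.toLin'_pow, Matrix.toLin'_apply]
  have hsub (x : Fin n → ℝ) :
      (lam • (1 : Matrix (Fin n) (Fin n) ℝ) - A).mulVec x = lam • x - f x := by
    rw [Matrix.sub_mulVec, Matrix.smul_mulVec, Matrix.one_mulVec, Matrix.toLin'_apply]
  have hsolve (hρ : localRho A b < lam) : ∃ x ∈ C,
      HasSum (fun j => lam⁻¹ ^ (j + 1) • (A ^ j).mulVec b) x ∧ lam • x - f x = b := by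
    obtain ⟨r, hρr, hrlam⟩ := exists_between (max_lt hρ hlam)
    have hgrowth : ∀ᶠ m in atTop, ‖(f ^ m) b‖ ≤ r ^ m := by
      simpa only [hf] using eventually_norm_pow_mulVec_le_of_localRho_lt
        ((le_max_left _ _).trans_lt hρr)
    simpa only [hf] using C.exists_mem_hasSum_inv_pow_smul_pow_apply hfC
      f.continuous_of_finiteDimensional hb ((le_max_right _ _).trans hρr.le) hrlam hgrowth
  refine ⟨⟨fun ⟨x, hxK, hx⟩ => ?_, fun hρ => ?_⟩, fun hρ => ?_⟩
  · obtain ⟨D, r, hD, hr, hrlam, hDr⟩ :=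
      C.exists_norm_pow_apply_le_geometric_of_smul_sub_apply_eq hK.salient hfC hlam hb hxK
        (by rwa [← hsub])
    exact (localRho_le_of_norm_pow_mulVec_le hD hr fun m => hf m b ▸ hDr m).trans_lt hrlam
  · obtain ⟨x0, hx0, -, hx0b⟩ := hsolve hρ
    exact ⟨x0, hx0, by rw [hsub, hx0b]⟩
  · obtain ⟨x0, hx0, hsum, hx0b⟩ := hsolve hρ
    exact ⟨x0, hsum.tendsto_sum_nat.comp (tendsto_add_atTop_nat 1), hx0, by rw [hsub, hx0b]⟩

theorem stmt3 {n : ℕ} {K : Set (Fin n → ℝ)} (hK : IsProperCone K)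
    (A : Matrix (Fin n) (Fin n) ℝ) (hA : ∀ v ∈ K, A.mulVec v ∈ K)
    (b : Fin n → ℝ) (hb : b ∈ K) (hb0 : b ≠ 0) (lam : ℝ) (hlam : 0 < lam) :
    ((∃ x ∈ K, (lam • (1 : Matrix (Fin n) (Fin n) ℝ) - A).mulVec x = b) ↔
      localRho A b < lam) ∧
    (localRho A b < lam →
      ∃ x0 : Fin n → ℝ,
        Tendsto (fun m : ℕ => ∑ j ∈ Finset.range (m + 1), lam⁻¹ ^ (j + 1) • (A ^ j).mulVec b)
          atTop (𝓝 x0) ∧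
        x0 ∈ K ∧ (lam • (1 : Matrix (Fin n) (Fin n) ℝ) - A).mulVec x0 = b) :=
  stmt3_general hK A hA b hb lam hlam
end

section
/- Let K be a proper cone in ℝⁿ, A an n×n real matrix with AK ⊆ K, b a nonzero vector of K, and λ > 0 with ρ_b(A) < λ. If x and x' are two solutions in K of (λI - A)x = b, then x - x' is either zero or an eigenvector of A corresponding to the eigenvalue λ lying in span K; in particular, if λ is not an eigenvalue of A then the solution in K is unique. -/
open Filter Matrix
open scoped Topology

theorem Matrix.mulVec_sub_eq_smul_of_smul_one_sub_mulVec_eq {ι R : Type*} [Fintype ι]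
    [DecidableEq ι] [CommRing R] {A : Matrix ι ι R} {lam : R} {x x' : ι → R}
    (h : (lam • (1 : Matrix ι ι R) - A) *ᵥ x = (lam • (1 : Matrix ι ι R) - A) *ᵥ x') :
    A *ᵥ (x - x') = lam • (x - x') := by
  have hker : (lam • (1 : Matrix ι ι R) - A) *ᵥ (x - x') = 0 := by
    rw [mulVec_sub, h, sub_self]
  rw [sub_mulVec, smul_mulVec, one_mulVec] at hker
  exact (sub_eq_zero.mp hker).symm

theorem stmt4_general {n : ℕ} (A : Matrix (Fin n) (Fin n) ℝ) (b : Fin n → ℝ) (lam : ℝ)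
    (x x' : Fin n → ℝ)
    (hsol : (lam • (1 : Matrix (Fin n) (Fin n) ℝ) - A).mulVec x = b)
    (hsol' : (lam • (1 : Matrix (Fin n) (Fin n) ℝ) - A).mulVec x' = b) :
    (x - x' = 0 ∨ (x - x' ≠ 0 ∧ A.mulVec (x - x') = lam • (x - x'))) ∧
    ((¬ ∃ v : Fin n → ℝ, v ≠ 0 ∧ A.mulVec v = lam • v) → x = x') := by
  have heig : A *ᵥ (x - x') = lam • (x - x') :=
    mulVec_sub_eq_smul_of_smul_one_sub_mulVec_eq (hsol.trans hsol'.symm)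
  refine ⟨(em (x - x' = 0)).imp id fun hne => ⟨hne, heig⟩, fun hnoEig => ?_⟩
  by_contra hne
  exact hnoEig ⟨x - x', sub_ne_zero.mpr hne, heig⟩

theorem stmt4 {n : ℕ} {K : Set (Fin n → ℝ)} (hK : IsProperCone K)
    (A : Matrix (Fin n) (Fin n) ℝ) (hA : ∀ v ∈ K, A.mulVec v ∈ K)
    (b : Fin n → ℝ) (hb : b ∈ K) (hb0 : b ≠ 0) (lam : ℝ) (hlam : 0 < lam)
    (hrho : localRho A b < lam)
    (x x' : Fin n → ℝ) (hx : x ∈ K) (hx' : x' ∈ K)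
    (hsol : (lam • (1 : Matrix (Fin n) (Fin n) ℝ) - A).mulVec x = b)
    (hsol' : (lam • (1 : Matrix (Fin n) (Fin n) ℝ) - A).mulVec x' = b) :
    (x - x' = 0 ∨ (x - x' ≠ 0 ∧ A.mulVec (x - x') = lam • (x - x'))) ∧
    ((¬ ∃ v : Fin n → ℝ, v ≠ 0 ∧ A.mulVec v = lam • v) → x = x') :=
  stmt4_general A b lam x x' hsol hsol'
end

section
/- Let A be a complex n×n matrix, b ∈ ℂⁿ nonzero, and λ > 0. Then ρ_b(A) < λ if and only if ⟨z, b⟩ = 0 for every generalized eigenvector z of the conjugate transpose A* corresponding to an eigenvalue of modulus ≥ λ. -/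
open Filter Matrix
open scoped Topology

/-- The local spectral radius of a complex matrix `A` at `b`. -/
noncomputable def localRhoC {n : ℕ} (A : Matrix (Fin n) (Fin n) ℂ) (b : Fin n → ℂ) : ℝ :=
  limsup (fun m : ℕ => ‖(A ^ m).mulVec b‖ ^ ((1 : ℝ) / m)) atTop

/-!
Split `ℂⁿ` into the generalized eigenspaces `E_μ` of `A`. A generalized eigenvector of `Aᴴ` for `τ`
is orthogonal to `E_μ` unless `μ = conj τ`, and for `x ∈ E_μ` the orbit `Aᵐ x` is `O(rᵐ)` for every
`r > |μ|`.

If `b` is orthogonal to the generalized eigenvectors of `Aᴴ` for eigenvalues of modulus `≥ λ`, then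
its component in the sum of the `E_μ` with `|μ| ≥ λ` is orthogonal to all generalized eigenvectors
of `Aᴴ`, hence zero; so `Aᵐ b = O(rᵐ)` for some `r < λ`.

Conversely, if `‖Aᵐ b‖ ≤ rᵐ` eventually with `r < λ ≤ |μ|` and `(Aᴴ - μ)ᵏ z = 0`, induction on `k`
gives `⟨z, Aᵐ b⟩ = conj μ ^ m * ⟨z, b⟩`, which is compatible with the bound only if `⟨z, b⟩ = 0`.
-/

open Asymptotics Module.End

namespace Module.End

variable {𝕜 E : Type*} [NormedField 𝕜] [SeminormedAddCommGroup E] [NormedSpace 𝕜 E]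

theorem isBigO_pow_apply_of_mem_maxGenEigenspace {f : End 𝕜 E} {μ : 𝕜} {x : E}
    (hx : x ∈ f.maxGenEigenspace μ) {r : ℝ} (hμr : ‖μ‖ < r) :
    (fun m : ℕ => (f ^ m) x) =O[atTop] (r ^ ·) := by
  suffices ∃ C, ∀ m : ℕ, ‖(f ^ m) x‖ ≤ C * r ^ m by
    obtain ⟨C, hC⟩ := this
    refine IsBigO.of_bound C (.of_forall fun m => ?_)
    rw [norm_pow, Real.norm_of_nonneg ((norm_nonneg μ).trans hμr.le)]
    exact hC m
  obtain ⟨k, hk⟩ := (mem_maxGenEigenspace f μ x).1 hx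
  clear hx
  induction k generalizing x with
  | zero => exact ⟨0, fun m => by simp_all⟩
  | succ k ih =>
    set y := (f - μ • 1) x with hy
    obtain ⟨C, hC⟩ := ih (x := y) (by rwa [hy, ← Module.End.mul_apply, ← pow_succ])
    have hstep : ∀ m : ℕ, (f ^ (m + 1)) x = μ • (f ^ m) x + (f ^ m) y := fun m => by
      rw [pow_succ, Module.End.mul_apply, ← map_smul, ← map_add, hy]
      simp
    set D := max ‖x‖ (C / (r - ‖μ‖))
    have hCD : C ≤ D * (r - ‖μ‖) := (div_le_iff₀ (sub_pos.2 hμr)).1 (le_max_right _ _)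
    refine ⟨D, fun m => ?_⟩
    induction m with
    | zero =>
      rw [pow_zero, Module.End.one_apply, pow_zero, mul_one]
      exact le_max_left _ _
    | succ m ihm =>
      have hr : 0 ≤ r ^ m := pow_nonneg ((norm_nonneg μ).trans hμr.le) m
      calc ‖(f ^ (m + 1)) x‖ ≤ ‖μ‖ * ‖(f ^ m) x‖ + ‖(f ^ m) y‖ := by
            rw [hstep, ← norm_smul]
            exact norm_add_le _ _
        _ ≤ ‖μ‖ * (D * r ^ m) + D * (r - ‖μ‖) * r ^ m := by
            gcongr
            exact (hC m).trans (mul_le_mul_of_nonneg_right hCD hr)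
        _ = D * r ^ (m + 1) := by ring

theorem isBigO_pow_apply_of_mem_iSup_maxGenEigenspace {f : End 𝕜 E} {lam : ℝ} (hlam : 0 < lam)
    {x : E} (hx : x ∈ ⨆ (μ) (_ : ‖μ‖ < lam), f.maxGenEigenspace μ) :
    ∃ r, 0 ≤ r ∧ r < lam ∧ (fun m : ℕ => (f ^ m) x) =O[atTop] (r ^ ·) := by
  rw [iSup_subtype'] at hx
  refine Submodule.iSup_induction _
    (motive := fun x => ∃ r, 0 ≤ r ∧ r < lam ∧ (fun m : ℕ => (f ^ m) x) =O[atTop] (r ^ ·)) hx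
    (fun μ x hx => ?_) ?_ fun x y ⟨r₁, h₁, hr₁, hOx⟩ ⟨r₂, h₂, hr₂, hOy⟩ => ?_
  · have hμ : ‖(μ : 𝕜)‖ < lam := μ.2
    exact ⟨(‖(μ : 𝕜)‖ + lam) / 2, by positivity, by linarith,
      isBigO_pow_apply_of_mem_maxGenEigenspace (r := (‖(μ : 𝕜)‖ + lam) / 2) hx (by linarith)⟩
  · refine ⟨0, le_rfl, hlam, ?_⟩
    simp only [map_zero]
    exact isBigO_zero _ _
  · refine ⟨max r₁ r₂, h₁.trans (le_max_left _ _), max_lt hr₁ hr₂, ?_⟩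
    simp only [map_add]
    exact (hOx.trans (isBigO_pow_pow_of_le_left h₁ (le_max_left _ _))).add
      (hOy.trans (isBigO_pow_pow_of_le_left h₂ (le_max_right _ _)))

end Module.End

section ExponentialGrowth

variable {E : Type*} [SeminormedAddCommGroup E] {v : ℕ → E}

theorem eventually_norm_rpow_one_div_le_of_isBigO {r r' : ℝ} (hv : v =O[atTop] (r ^ ·))
    (hr : 0 ≤ r) (hrr' : r < r') : ∀ᶠ m : ℕ in atTop, ‖v m‖ ^ ((1 : ℝ) / m) ≤ r' := by
  have hr' : 0 ≤ r' := hr.trans hrr'.le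
  filter_upwards [(hv.trans_isLittleO (isLittleO_pow_pow_of_lt_left hr hrr')).bound one_pos,
    eventually_ne_atTop 0] with m hm hm0
  rw [one_mul, norm_pow, Real.norm_of_nonneg hr'] at hm
  calc ‖v m‖ ^ ((1 : ℝ) / m) ≤ (r' ^ m) ^ ((m : ℝ)⁻¹) := by rw [one_div]; gcongr
    _ = r' := Real.pow_rpow_inv_natCast hr' hm0

theorem limsup_norm_rpow_one_div_lt_of_isBigO {r lam : ℝ} (hv : v =O[atTop] (r ^ ·))
    (hr : 0 ≤ r) (hrlam : r < lam) :
    limsup (fun m : ℕ => ‖v m‖ ^ ((1 : ℝ) / m)) atTop < lam := by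
  obtain ⟨r', hrr', hr'lam⟩ := exists_between hrlam
  refine lt_of_le_of_lt (limsup_le_of_le ?_ (eventually_norm_rpow_one_div_le_of_isBigO hv hr hrr'))
    hr'lam
  exact isCoboundedUnder_le_of_le (atTop : Filter ℕ) fun m => by positivity

theorem isBigO_pow_of_limsup_norm_rpow_one_div_lt {C r : ℝ} (hv : v =O[atTop] (C ^ ·))
    (hC : 0 ≤ C) (h : limsup (fun m : ℕ => ‖v m‖ ^ ((1 : ℝ) / m)) atTop < r) :
    v =O[atTop] (r ^ ·) := by
  have hbdd := isBoundedUnder_of_eventually_le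
    (eventually_norm_rpow_one_div_le_of_isBigO hv hC (lt_add_one C))
  refine IsBigO.of_bound' ?_
  filter_upwards [eventually_lt_of_limsup_lt h hbdd, eventually_ne_atTop 0] with m hm hm0
  rw [one_div] at hm
  calc ‖v m‖ = (‖v m‖ ^ ((m : ℝ)⁻¹)) ^ m := (Real.rpow_inv_natCast_pow (norm_nonneg _) hm0).symm
    _ ≤ r ^ m := by gcongr
    _ ≤ ‖r ^ m‖ := Real.le_norm_self _

end ExponentialGrowth

theorem eq_zero_of_isBigO_mul_pow {𝕜 : Type*} [NormedField 𝕜] {c a : 𝕜} {r : ℝ} (hr : 0 ≤ r)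
    (hra : r < ‖a‖) (h : (fun m : ℕ => c * a ^ m) =O[atTop] (r ^ ·)) : c = 0 := by
  by_contra hc
  have ha : a ≠ 0 := norm_pos_iff.1 (hr.trans_lt hra)
  have hnorm : (fun m : ℕ => ‖a‖ ^ m) =O[atTop] (a ^ ·) :=
    (isBigO_norm_left.2 (isBigO_refl _ _)).congr_left fun m => norm_pow a m
  refine isLittleO_irrefl (l := atTop) (.of_forall fun m => pow_ne_zero m ha) ?_
  exact (isLittleO_const_mul_left_iff' (Ne.isUnit hc)).1
    ((h.trans_isLittleO (isLittleO_pow_pow_of_lt_left hr hra)).trans_isBigO hnorm)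

namespace Matrix

variable {ι : Type*} [Fintype ι]

theorem star_conjTranspose_mulVec_dotProduct {R : Type*} [CommSemiring R] [StarRing R]
    (A : Matrix ι ι R) (z x : ι → R) : star (Aᴴ *ᵥ z) ⬝ᵥ x = star z ⬝ᵥ (A *ᵥ x) := by
  rw [star_mulVec, conjTranspose_conjTranspose, dotProduct_mulVec]

theorem isBigO_dotProduct_left {𝕜 : Type*} [RCLike 𝕜] {α : Type*} {l : Filter α} (z : ι → 𝕜)
    (v : α → ι → 𝕜) : (fun a => z ⬝ᵥ v a) =O[l] v :=
  (LinearMap.toContinuousLinearMap (dotProductBilin 𝕜 𝕜 z)).isBigO_comp v l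

variable [DecidableEq ι]

theorem mem_maxGenEigenspace_toLin' {K : Type*} [Field K] {A : Matrix ι ι K} {μ : K}
    {x : ι → K} :
    x ∈ maxGenEigenspace (toLin' A) μ ↔ ∃ k : ℕ, ((A - μ • 1) ^ k) *ᵥ x = 0 := by
  have h : toLin' A - μ • 1 = toLin' (A - μ • 1) := by
    rw [map_sub, map_smul, toLin'_one, Module.End.one_eq_id]
  simp only [mem_maxGenEigenspace, h, ← toLin'_pow, toLin'_apply]

theorem dotProduct_eq_zero_of_mem_maxGenEigenspace {K : Type*} [Field K] [StarRing K]
    {A : Matrix ι ι K} {τ μ : K} (hτμ : star τ ≠ μ) {z x : ι → K}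
    (hz : z ∈ maxGenEigenspace (toLin' Aᴴ) τ) (hx : x ∈ maxGenEigenspace (toLin' A) μ) :
    star z ⬝ᵥ x = 0 := by
  rw [mem_maxGenEigenspace_toLin'] at hz hx
  obtain ⟨j, hz⟩ := hz
  obtain ⟨k, hx⟩ := hx
  induction j generalizing z x k with
  | zero => simp_all
  | succ j ihj =>
    induction k generalizing x with
    | zero => simp_all
    | succ k ihk =>
      have h₁ : star ((Aᴴ - τ • 1) *ᵥ z) ⬝ᵥ x = 0 := ihj (by rwa [mulVec_mulVec, ← pow_succ]) _ hx
      have h₂ : star z ⬝ᵥ ((A - μ • 1) *ᵥ x) = 0 := ihk (by rwa [mulVec_mulVec, ← pow_succ])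
      have key : star ((Aᴴ - τ • 1) *ᵥ z) ⬝ᵥ x =
          star z ⬝ᵥ ((A - μ • 1) *ᵥ x) + (μ - star τ) * (star z ⬝ᵥ x) := by
        rw [show Aᴴ - τ • 1 = (A - star τ • 1)ᴴ by simp, star_conjTranspose_mulVec_dotProduct]
        simp only [sub_mulVec, smul_mulVec, one_mulVec, dotProduct_sub, dotProduct_smul,
          smul_eq_mul]
        ring
      rw [h₁, h₂, zero_add] at key
      exact (mul_eq_zero.1 key.symm).resolve_left (sub_ne_zero.2 hτμ.symm)

variable {𝕜 : Type*} [RCLike 𝕜]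

open scoped Matrix.Norms.Operator in
theorem isBigO_pow_mulVec (A : Matrix ι ι 𝕜) (v : ι → 𝕜) :
    (fun m : ℕ => (A ^ m) *ᵥ v) =O[atTop] (‖A‖ ^ ·) := by
  refine IsBigO.of_bound ‖v‖ (.of_forall fun m => ?_)
  rw [norm_pow, norm_norm]
  induction m with
  | zero => simp
  | succ m ih =>
    calc ‖(A ^ (m + 1)) *ᵥ v‖ ≤ ‖A‖ * ‖(A ^ m) *ᵥ v‖ := by
          rw [pow_succ', ← mulVec_mulVec]
          exact linfty_opNorm_mulVec _ _
      _ ≤ ‖A‖ * (‖v‖ * ‖A‖ ^ m) := by gcongr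
      _ = ‖v‖ * ‖A‖ ^ (m + 1) := by ring

theorem dotProduct_eq_zero_of_isBigO_pow_mulVec {A : Matrix ι ι 𝕜} {b : ι → 𝕜} {μ : 𝕜} {r : ℝ}
    (hr : 0 ≤ r) (hrμ : r < ‖μ‖) (hb : (fun m : ℕ => (A ^ m) *ᵥ b) =O[atTop] (r ^ ·))
    {z : ι → 𝕜} (hz : z ∈ maxGenEigenspace (toLin' Aᴴ) μ) : star z ⬝ᵥ b = 0 := by
  rw [mem_maxGenEigenspace_toLin'] at hz
  obtain ⟨k, hz⟩ := hz
  induction k generalizing z with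
  | zero => simp_all
  | succ k ih =>
    set w := (Aᴴ - μ • 1) *ᵥ z with hw
    have hw_orth : ∀ m : ℕ, star w ⬝ᵥ ((A ^ m) *ᵥ b) = 0 := fun m => by
      rw [← star_conjTranspose_mulVec_dotProduct, conjTranspose_pow]
      refine ih ?_
      have hcomm : Commute ((Aᴴ - μ • 1) ^ k) (Aᴴ ^ m) :=
        ((Commute.refl Aᴴ).sub_left ((Commute.one_left Aᴴ).smul_left μ)).pow_pow k m
      have hkw : ((Aᴴ - μ • 1) ^ k) *ᵥ w = 0 := by rwa [hw, mulVec_mulVec, ← pow_succ]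
      rw [mulVec_mulVec, hcomm.eq, ← mulVec_mulVec, hkw, mulVec_zero]
    have hgeom : ∀ m : ℕ, star z ⬝ᵥ ((A ^ m) *ᵥ b) = (star z ⬝ᵥ b) * star μ ^ m := by
      intro m
      induction m with
      | zero => simp
      | succ m ihm =>
        have hAz : Aᴴ *ᵥ z = μ • z + w := by simp [hw, sub_mulVec, smul_mulVec]
        rw [pow_succ', ← mulVec_mulVec, ← star_conjTranspose_mulVec_dotProduct, hAz, star_add,
          add_dotProduct, hw_orth, star_smul, smul_dotProduct, ihm, pow_succ]
        simp only [smul_eq_mul, add_zero]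
        ring
    refine eq_zero_of_isBigO_mul_pow (a := star μ) hr (by rwa [norm_star]) ?_
    exact ((isBigO_dotProduct_left (star z) _).trans hb).congr_left hgeom

open scoped ComplexOrder in
theorem mem_iSup_maxGenEigenspace_of_forall_dotProduct_eq_zero (A : Matrix ι ι ℂ) {b : ι → ℂ}
    (p : ℂ → Prop)
    (hb : ∀ τ, ¬ p (star τ) → ∀ z ∈ maxGenEigenspace (toLin' Aᴴ) τ, star z ⬝ᵥ b = 0) :
    b ∈ ⨆ (μ) (_ : p μ), maxGenEigenspace (toLin' A) μ := by
  have hb_top : b ∈ ⨆ μ, maxGenEigenspace (toLin' A) μ := by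
    rw [iSup_maxGenEigenspace_eq_top]
    exact Submodule.mem_top
  rw [iSup_split _ p] at hb_top
  obtain ⟨u, hu, w, hw, rfl⟩ := Submodule.mem_sup.1 hb_top
  have horth : ∀ {τ : ℂ} {q : ℂ → Prop}, ¬ q (star τ) → ∀ z ∈ maxGenEigenspace (toLin' Aᴴ) τ,
      (⨆ (μ) (_ : q μ), maxGenEigenspace (toLin' A) μ) ≤
        LinearMap.ker (dotProductBilin ℂ ℂ (star z)) :=
    fun hτ z hz => iSup₂_le fun μ hμ x hx =>
      dotProduct_eq_zero_of_mem_maxGenEigenspace (fun h => hτ (h ▸ hμ)) hz hx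
  suffices hw0 : ∀ z, star z ⬝ᵥ w = 0 by
    rw [dotProduct_star_self_eq_zero.1 (hw0 w), add_zero]
    exact hu
  intro z
  have hz : z ∈ ⨆ τ, maxGenEigenspace (toLin' Aᴴ) τ := by
    rw [iSup_maxGenEigenspace_eq_top]
    exact Submodule.mem_top
  refine Submodule.iSup_induction _ (motive := fun z => star z ⬝ᵥ w = 0) hz
    (fun τ z hz => ?_) (by simp) fun z₁ z₂ h₁ h₂ => by simp [add_dotProduct, h₁, h₂]
  by_cases hτ : p (star τ)
  · exact horth (q := fun μ => ¬ p μ) (not_not.2 hτ) z hz hw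
  · have hzu : star z ⬝ᵥ u = 0 := horth hτ z hz hu
    simpa [dotProduct_add, hzu] using hb τ hτ z hz

end Matrix

theorem stmt5_general {n : ℕ} (A : Matrix (Fin n) (Fin n) ℂ) (b : Fin n → ℂ)
    (lam : ℝ) (hlam : 0 < lam) :
    localRhoC A b < lam ↔
      ∀ (μ : ℂ) (z : Fin n → ℂ), z ≠ 0 →
        (∃ k : ℕ, 1 ≤ k ∧
          ((A.conjTranspose - μ • (1 : Matrix (Fin n) (Fin n) ℂ)) ^ k).mulVec z = 0) →
        lam ≤ ‖μ‖ → star z ⬝ᵥ b = 0 := by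
  constructor
  · rintro h μ z - ⟨k, -, hz⟩ hμ
    obtain ⟨r, hρr, hr⟩ := exists_between h
    have hb : (fun m : ℕ => (A ^ m) *ᵥ b) =O[atTop] (max r 0 ^ ·) := by
      open scoped Matrix.Norms.Operator in
      exact isBigO_pow_of_limsup_norm_rpow_one_div_lt (isBigO_pow_mulVec A b) (norm_nonneg A)
        (hρr.trans_le (le_max_left r 0))
    exact dotProduct_eq_zero_of_isBigO_pow_mulVec (le_max_right r 0)
      (max_lt (hr.trans_le hμ) (hlam.trans_le hμ)) hb (mem_maxGenEigenspace_toLin'.2 ⟨k, hz⟩)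
  · intro h
    have hb : b ∈ ⨆ (μ) (_ : ‖μ‖ < lam), maxGenEigenspace (toLin' A) μ := by
      refine mem_iSup_maxGenEigenspace_of_forall_dotProduct_eq_zero A (‖·‖ < lam)
        fun τ hτ z hz => ?_
      obtain rfl | hz0 := eq_or_ne z 0
      · simp
      obtain ⟨k, hk⟩ := mem_maxGenEigenspace_toLin'.1 hz
      refine h τ z hz0 ⟨k + 1, Nat.le_add_left 1 k, ?_⟩ (by simpa using hτ)
      rw [pow_succ', ← mulVec_mulVec, hk, mulVec_zero]
    obtain ⟨r, hr, hrlam, hO⟩ := isBigO_pow_apply_of_mem_iSup_maxGenEigenspace hlam hb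
    exact limsup_norm_rpow_one_div_lt_of_isBigO (by simpa [← toLin'_pow] using hO) hr hrlam

theorem stmt5 {n : ℕ} (A : Matrix (Fin n) (Fin n) ℂ) (b : Fin n → ℂ) (hb : b ≠ 0)
    (lam : ℝ) (hlam : 0 < lam) :
    localRhoC A b < lam ↔
      ∀ (μ : ℂ) (z : Fin n → ℂ), z ≠ 0 →
        (∃ k : ℕ, 1 ≤ k ∧
          ((A.conjTranspose - μ • (1 : Matrix (Fin n) (Fin n) ℂ)) ^ k).mulVec z = 0) →
        lam ≤ ‖μ‖ → star z ⬝ᵥ b = 0 :=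
  stmt5_general A b lam hlam
end

section
/- Let P be an n×n nonnegative matrix, b a nonnegative vector in ℝⁿ, and λ > 0. Then the equation (λI - P)x = b has a nonnegative solution x if and only if ρ(P_{αα}) < λ for every class α of P having access to the support of b. -/
/-!
Necessity: a nonnegative solution `x` is positive at every vertex with access to `supp b`. For a
class `α` with such access, `y = (λI - P_{αα}) x` is nonnegative, and positive either at a vertex of
`α ∩ supp b` or where a path from `α` to `supp b` leaves `α`. Summing `P_{αα}^k y` over enough
powers spreads this strictness over all of `α`, and a positive vector `v` with `A v < λ v` gives
`‖A ^ m‖ = O(c ^ m)` for some `c < λ`, so `ρ(A) < λ`.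

Sufficiency: the vertices with access to `supp b` form a union of classes. Take a class `α` of them
not accessed from the others, solve the system on the others first, and then solve the `α` block
with the Neumann series `∑ (P_{αα} / λ) ^ m`, which converges because `ρ(P_{αα}) < λ`.
-/

open Filter Matrix
open scoped Topology Classical

attribute [local instance] Matrix.linftyOpNormedAddCommGroup

/-- The spectral radius of a real matrix, via Gelfand's formula. -/
noncomputable def rho {n : ℕ} (A : Matrix (Fin n) (Fin n) ℝ) : ℝ :=
  limsup (fun m : ℕ => ‖A ^ m‖ ^ ((1 : ℝ) / m)) atTop

/-- `i` has access to `j` in the directed graph of `P` (edges where `P a b > 0`). -/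
def Access {n : ℕ} (P : Matrix (Fin n) (Fin n) ℝ) (i j : Fin n) : Prop :=
  Relation.ReflTransGen (fun a b => 0 < P a b) i j

/-- The matrix obtained from `P` by zeroing all entries outside `α × α`, where `α` is the
class (strongly connected component) of the vertex `i`; its spectral radius is `ρ(P_{αα})`. -/
noncomputable def classMatrix {n : ℕ} (P : Matrix (Fin n) (Fin n) ℝ) (i : Fin n) :
    Matrix (Fin n) (Fin n) ℝ :=
  fun a b =>
    if (Access P i a ∧ Access P a i) ∧ (Access P i b ∧ Access P b i) then P a b else 0

section Nonneg

variable {ι : Type*} [Fintype ι] {A : Matrix ι ι ℝ}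

lemma smul_one_sub_mulVec_apply [DecidableEq ι] (lam : ℝ) (v : ι → ℝ) (i : ι) :
    ((lam • (1 : Matrix ι ι ℝ) - A) *ᵥ v) i = lam * v i - (A *ᵥ v) i := by
  simp [sub_mulVec, smul_mulVec]

lemma mulVec_apply_nonneg (hA : ∀ i j, 0 ≤ A i j) {v : ι → ℝ} (hv : ∀ i, 0 ≤ v i) (i : ι) :
    0 ≤ (A *ᵥ v) i :=
  Finset.sum_nonneg fun j _ => mul_nonneg (hA i j) (hv j)

lemma mulVec_apply_mono (hA : ∀ i j, 0 ≤ A i j) {u v : ι → ℝ} (huv : ∀ i, u i ≤ v i) (i : ι) :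
    (A *ᵥ u) i ≤ (A *ᵥ v) i :=
  Finset.sum_le_sum fun j _ => mul_le_mul_of_nonneg_left (huv j) (hA i j)

lemma mul_le_mulVec_apply (hA : ∀ i j, 0 ≤ A i j) {v : ι → ℝ} (hv : ∀ i, 0 ≤ v i) (i j : ι) :
    A i j * v j ≤ (A *ᵥ v) i :=
  Finset.single_le_sum (f := fun k => A i k * v k) (fun k _ => mul_nonneg (hA i k) (hv k))
    (Finset.mem_univ j)

lemma pow_mulVec_le [DecidableEq ι] (hA : ∀ i j, 0 ≤ A i j) {v : ι → ℝ} {c : ℝ}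
    (h : ∀ i, (A *ᵥ v) i ≤ c * v i) (hc : 0 ≤ c) (m : ℕ) (i : ι) :
    (A ^ m *ᵥ v) i ≤ c ^ m * v i := by
  induction m generalizing i with
  | zero => simp
  | succ m ih =>
    calc (A ^ (m + 1) *ᵥ v) i = (A ^ m *ᵥ (A *ᵥ v)) i := by rw [pow_succ, mulVec_mulVec]
      _ ≤ (A ^ m *ᵥ (c • v)) i := mulVec_apply_mono (pow_apply_nonneg hA m) (by simpa using h) i
      _ = c * (A ^ m *ᵥ v) i := by simp [mulVec_smul]
      _ ≤ c * (c ^ m * v i) := mul_le_mul_of_nonneg_left (ih i) hc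
      _ = c ^ (m + 1) * v i := by ring

end Nonneg

section LinftyOpNorm

variable {ι κ : Type*} [Fintype ι] [Fintype κ]

lemma norm_entry_le_linfty_opNorm (A : Matrix ι κ ℝ) (i : ι) (j : κ) : ‖A i j‖ ≤ ‖A‖ := by
  rw [linfty_opNorm_def]
  calc ‖A i j‖ ≤ ∑ k, ‖A i k‖ :=
        Finset.single_le_sum (f := fun k => ‖A i k‖) (fun k _ => norm_nonneg _) (Finset.mem_univ j)
    _ = ((∑ k, ‖A i k‖₊ : NNReal) : ℝ) := by push_cast; rfl
    _ ≤ _ := NNReal.coe_le_coe.2 (Finset.le_sup (f := fun i => ∑ k, ‖A i k‖₊) (Finset.mem_univ i))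

lemma linfty_opNorm_le_of_sum_le {A : Matrix ι κ ℝ} {r : ℝ} (hr : 0 ≤ r)
    (h : ∀ i, ∑ j, ‖A i j‖ ≤ r) : ‖A‖ ≤ r := by
  rw [linfty_opNorm_def, ← Real.coe_toNNReal r hr, NNReal.coe_le_coe]
  refine Finset.sup_le fun i _ => ?_
  rw [← NNReal.coe_le_coe, Real.coe_toNNReal r hr]
  push_cast
  exact h i

end LinftyOpNorm

section Subinvariance

variable {ι : Type*} [Fintype ι] [DecidableEq ι] {A : Matrix ι ι ℝ}

lemma exists_norm_pow_le_of_mulVec_le (hA : ∀ i j, 0 ≤ A i j) {v : ι → ℝ} (hv : ∀ i, 0 < v i)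
    {c : ℝ} (hc : 0 ≤ c) (h : ∀ i, (A *ᵥ v) i ≤ c * v i) :
    ∃ K, 0 ≤ K ∧ ∀ m, ‖A ^ m‖ ≤ K * c ^ m := by
  have hK : 0 ≤ ‖v‖ * ∑ j, (v j)⁻¹ :=
    mul_nonneg (norm_nonneg v) (Finset.sum_nonneg fun j _ => (inv_pos.2 (hv j)).le)
  refine ⟨_, hK, fun m => linfty_opNorm_le_of_sum_le (by positivity) fun i => ?_⟩
  have hentry : ∀ j, ‖(A ^ m) i j‖ ≤ c ^ m * ‖v‖ * (v j)⁻¹ := fun j => by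
    rw [Real.norm_of_nonneg (pow_apply_nonneg hA m i j), le_mul_inv_iff₀ (hv j)]
    calc (A ^ m) i j * v j ≤ (A ^ m *ᵥ v) i :=
          mul_le_mulVec_apply (pow_apply_nonneg hA m) (fun k => (hv k).le) i j
      _ ≤ c ^ m * v i := pow_mulVec_le hA h hc m i
      _ ≤ c ^ m * ‖v‖ := by gcongr; exact (Real.le_norm_self _).trans (norm_le_pi_norm v i)
  calc ∑ j, ‖(A ^ m) i j‖ ≤ ∑ j, c ^ m * ‖v‖ * (v j)⁻¹ := Finset.sum_le_sum fun j _ => hentry j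
    _ = (‖v‖ * ∑ j, (v j)⁻¹) * c ^ m := by rw [← Finset.mul_sum]; ring

end Subinvariance

section NeumannSeries

variable {ι : Type*} [Fintype ι] [DecidableEq ι] {A : Matrix ι ι ℝ}

lemma exists_nonneg_mulVec_eq_of_norm_pow_le (hA : ∀ i j, 0 ≤ A i j) {lam μ K : ℝ}
    (hlam : 0 < lam) (hμ : 0 ≤ μ) (hμlam : μ < lam) (hK : ∀ m, ‖A ^ m‖ ≤ K * μ ^ m)
    {u : ι → ℝ} (hu : ∀ i, 0 ≤ u i) :
    ∃ w : ι → ℝ, (∀ i, 0 ≤ w i) ∧ (lam • (1 : Matrix ι ι ℝ) - A) *ᵥ w = u := by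
  set B := lam⁻¹ • A
  have hBpow : ∀ m, B ^ m = (lam ^ m)⁻¹ • A ^ m := fun m => by rw [smul_pow, inv_pow]
  have hB : ∀ i j, 0 ≤ B i j := fun i j => mul_nonneg (inv_nonneg.2 hlam.le) (hA i j)
  have hsum : Summable (B ^ ·) := by
    refine Pi.summable.2 fun i => Pi.summable.2 fun j => ?_
    refine Summable.of_norm_bounded ((summable_geometric_of_lt_one (div_nonneg hμ hlam.le)
      ((div_lt_one hlam).2 hμlam)).mul_left K) fun m => ?_
    calc ‖(B ^ m) i j‖ = (lam ^ m)⁻¹ * ‖(A ^ m) i j‖ := by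
          rw [hBpow, Matrix.smul_apply, smul_eq_mul, norm_mul, norm_inv, norm_pow,
            Real.norm_of_nonneg hlam.le]
      _ ≤ (lam ^ m)⁻¹ * (K * μ ^ m) := by
          gcongr; exact (norm_entry_le_linfty_opNorm _ i j).trans (hK m)
      _ = K * (μ / lam) ^ m := by rw [div_pow]; ring
  set S := ∑' m, B ^ m
  have hS : ∀ i j, 0 ≤ S i j := fun i j =>
    (Pi.hasSum.1 (Pi.hasSum.1 hsum.hasSum i) j).nonneg fun m => pow_apply_nonneg hB m i j
  refine ⟨lam⁻¹ • (S *ᵥ u), fun i => ?_, ?_⟩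
  · exact mul_nonneg (inv_nonneg.2 hlam.le) (mulVec_apply_nonneg hS hu i)
  · have hfactor : lam • (1 : Matrix ι ι ℝ) - A = lam • (1 - B) := by
      rw [smul_sub, smul_smul, mul_inv_cancel₀ hlam.ne', one_smul]
    rw [hfactor, smul_mulVec, mulVec_smul, smul_smul, mul_inv_cancel₀ hlam.ne', one_smul,
      mulVec_mulVec, hsum.one_sub_mul_tsum_pow, one_mulVec]

end NeumannSeries

section SpectralRadius

variable {n : ℕ} {A : Matrix (Fin n) (Fin n) ℝ}

lemma rho_le_of_norm_pow_le {K d : ℝ} (hK : 0 ≤ K) (hd : 0 ≤ d)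
    (h : ∀ m, ‖A ^ m‖ ≤ K * d ^ m) : rho A ≤ d := by
  -- `K + 1` rather than `K`: `0 ^ (1 / m)` does not tend to `1`.
  have hK1 : 0 < K + 1 := by linarith
  have hbound : ∀ᶠ m : ℕ in atTop, ‖A ^ m‖ ^ ((1 : ℝ) / m) ≤ (K + 1) ^ ((1 : ℝ) / m) * d := by
    filter_upwards [eventually_ne_atTop 0] with m hm
    calc ‖A ^ m‖ ^ ((1 : ℝ) / m) ≤ ((K + 1) * d ^ m) ^ ((1 : ℝ) / m) := by
          gcongr
          exact (h m).trans (by gcongr; linarith)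
      _ = (K + 1) ^ ((1 : ℝ) / m) * d := by
          rw [Real.mul_rpow hK1.le (by positivity), one_div, Real.pow_rpow_inv_natCast hd hm]
  have hlim : Tendsto (fun m : ℕ => (K + 1) ^ ((1 : ℝ) / m) * d) atTop (𝓝 d) := by
    simpa using ((tendsto_const_nhds.rpow tendsto_one_div_atTop_nhds_zero_nat
      (Or.inl hK1.ne')).mul_const d)
  have hcobdd : IsCoboundedUnder (· ≤ ·) atTop fun m : ℕ => ‖A ^ m‖ ^ ((1 : ℝ) / m) :=
    isCoboundedUnder_le_of_le atTop fun m => by positivity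
  exact (limsup_le_limsup hbound hcobdd hlim.isBoundedUnder_le).trans_eq hlim.limsup_eq

lemma exists_norm_pow_le_of_rho_lt {μ : ℝ} (hμ : 0 < μ) (h : rho A < μ) :
    ∃ K, ∀ m, ‖A ^ m‖ ≤ K * μ ^ m := by
  let _ : NormedRing (Matrix (Fin n) (Fin n) ℝ) := Matrix.linftyOpNormedRing
  have hbdd : IsBoundedUnder (· ≤ ·) atTop fun m : ℕ => ‖A ^ m‖ ^ ((1 : ℝ) / m) := by
    refine isBoundedUnder_of_eventually_le (a := max 1 ‖A‖) ?_
    filter_upwards [eventually_ne_atTop 0] with m hm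
    calc ‖A ^ m‖ ^ ((1 : ℝ) / m) ≤ (max 1 ‖A‖ ^ m) ^ ((1 : ℝ) / m) := by
          gcongr
          exact (norm_pow_le' A (Nat.pos_of_ne_zero hm)).trans (by gcongr; exact le_max_right _ _)
      _ = max 1 ‖A‖ := by rw [one_div, Real.pow_rpow_inv_natCast (by positivity) hm]
  have hratio : ∀ᶠ m : ℕ in atTop, ‖A ^ m‖ / μ ^ m ≤ 1 := by
    filter_upwards [eventually_lt_of_limsup_lt h hbdd, eventually_ne_atTop 0] with m hm hm0
    rw [div_le_one (by positivity), ← Real.rpow_inv_natCast_pow (norm_nonneg _) hm0, ← one_div]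
    exact pow_le_pow_left₀ (by positivity) hm.le m
  obtain ⟨K, hK⟩ := (isBoundedUnder_of_eventually_le hratio).bddAbove_range
  exact ⟨K, fun m => (div_le_iff₀ (by positivity)).1 (hK ⟨m, rfl⟩)⟩

lemma rho_lt_of_mulVec_lt (hA : ∀ i j, 0 ≤ A i j) {v : Fin n → ℝ} (hv : ∀ i, 0 ≤ v i)
    {lam : ℝ} (hlam : 0 < lam) (h : ∀ i, (A *ᵥ v) i < lam * v i) : rho A < lam := by
  have hvpos : ∀ i, 0 < v i := fun i =>
    pos_of_mul_pos_right ((mulVec_apply_nonneg hA hv i).trans_lt (h i)) hlam.le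
  have hnear : ∀ i, ∀ᶠ c in 𝓝 lam, (A *ᵥ v) i < c * v i := fun i =>
    (tendsto_id.mul_const (v i)).eventually_const_lt (h i)
  have hev : ∀ᶠ c in 𝓝[<] lam, (∀ i, (A *ᵥ v) i < c * v i) ∧ 0 < c :=
    nhdsWithin_le_nhds ((eventually_all.2 hnear).and (lt_mem_nhds hlam))
  obtain ⟨c, ⟨hcv, hc0⟩, hclam⟩ := (hev.and self_mem_nhdsWithin).exists
  obtain ⟨K, hK, hnorm⟩ := exists_norm_pow_le_of_mulVec_le hA hvpos hc0.le fun i => (hcv i).le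
  exact (rho_le_of_norm_pow_le hK hc0.le hnorm).trans_lt hclam

lemma exists_nonneg_mulVec_eq_of_rho_lt (hA : ∀ i j, 0 ≤ A i j) {lam : ℝ} (hlam : 0 < lam)
    (h : rho A < lam) {u : Fin n → ℝ} (hu : ∀ i, 0 ≤ u i) :
    ∃ w : Fin n → ℝ, (∀ i, 0 ≤ w i) ∧ (lam • (1 : Matrix (Fin n) (Fin n) ℝ) - A) *ᵥ w = u := by
  set μ := max (lam / 2) ((rho A + lam) / 2)
  have hμ : 0 < μ := (half_pos hlam).trans_le (le_max_left _ _)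
  have hρμ : rho A < μ := (by linarith : rho A < (rho A + lam) / 2).trans_le (le_max_right _ _)
  obtain ⟨K, hK⟩ := exists_norm_pow_le_of_rho_lt hμ hρμ
  exact exists_nonneg_mulVec_eq_of_norm_pow_le hA hlam hμ.le (max_lt (by linarith) (by linarith))
    hK hu

end SpectralRadius

lemma Relation.ReflTransGen.exists_exit {α : Type*} {r : α → α → Prop} {S : α → Prop} {a t : α}
    (h : Relation.ReflTransGen r a t) (ha : S a) :
    S t ∨ ∃ u k, S u ∧ ¬ S k ∧ r u k ∧ Relation.ReflTransGen r k t := by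
  induction h using Relation.ReflTransGen.head_induction_on with
  | refl => exact Or.inl ha
  | @head a k hak hkt ih =>
    by_cases hk : S k
    · exact ih hk
    · exact Or.inr ⟨a, k, ha, hk, hak, hkt⟩

lemma Finset.exists_minimal_reflTransGen {α : Type*} (r : α → α → Prop) {U : Finset α}
    (hU : U.Nonempty) :
    ∃ i ∈ U, ∀ j ∈ U, Relation.ReflTransGen r j i → Relation.ReflTransGen r i j := by
  obtain ⟨i, hiU, hmin⟩ :=
    U.exists_min_image (fun i => (U.filter (Relation.ReflTransGen r · i)).card) hU
  refine ⟨i, hiU, fun j hjU hji => ?_⟩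
  have hsub : U.filter (Relation.ReflTransGen r · j) ⊆ U.filter (Relation.ReflTransGen r · i) :=
    fun k hk => by
      rw [Finset.mem_filter] at hk ⊢
      exact ⟨hk.1, hk.2.trans hji⟩
  have heq := Finset.eq_of_subset_of_card_le hsub (hmin j hjU)
  have hi : i ∈ U.filter (Relation.ReflTransGen r · i) := Finset.mem_filter.2 ⟨hiU, .refl⟩
  rw [← heq] at hi
  exact (Finset.mem_filter.1 hi).2

section Classes

variable {n : ℕ} {P : Matrix (Fin n) (Fin n) ℝ} {i : Fin n}

def InClass (P : Matrix (Fin n) (Fin n) ℝ) (i a : Fin n) : Prop :=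
  Access P i a ∧ Access P a i

lemma inClass_self (P : Matrix (Fin n) (Fin n) ℝ) (i : Fin n) : InClass P i i :=
  ⟨.refl, .refl⟩

lemma classMatrix_apply_of_inClass {a b : Fin n} (ha : InClass P i a) (hb : InClass P i b) :
    classMatrix P i a b = P a b :=
  if_pos ⟨ha, hb⟩

lemma classMatrix_apply_of_not_inClass_left {a : Fin n} (ha : ¬ InClass P i a) (b : Fin n) :
    classMatrix P i a b = 0 :=
  if_neg fun h => ha h.1

lemma classMatrix_apply_of_not_inClass_right {b : Fin n} (hb : ¬ InClass P i b) (a : Fin n) :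
    classMatrix P i a b = 0 :=
  if_neg fun h => hb h.2

lemma classMatrix_nonneg (hP : ∀ a b, 0 ≤ P a b) (i a b : Fin n) : 0 ≤ classMatrix P i a b := by
  unfold classMatrix; split_ifs <;> simp [hP]

lemma classMatrix_le (hP : ∀ a b, 0 ≤ P a b) (i a b : Fin n) : classMatrix P i a b ≤ P a b := by
  unfold classMatrix; split_ifs <;> simp [hP]

lemma classMatrix_mulVec_apply_of_not_inClass {a : Fin n} (ha : ¬ InClass P i a) (v : Fin n → ℝ) :
    (classMatrix P i *ᵥ v) a = 0 := by
  simp [mulVec, dotProduct, classMatrix_apply_of_not_inClass_left ha]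

lemma classMatrix_mulVec_congr {v w : Fin n → ℝ} (h : ∀ a, InClass P i a → v a = w a) :
    classMatrix P i *ᵥ v = classMatrix P i *ᵥ w := by
  ext a
  simp only [mulVec, dotProduct]
  refine Finset.sum_congr rfl fun b _ => ?_
  by_cases hb : InClass P i b
  · rw [h b hb]
  · simp [classMatrix_apply_of_not_inClass_right hb]

lemma mulVec_apply_eq_classMatrix_mulVec_apply {w : Fin n → ℝ}
    (hw : ∀ b, ¬ InClass P i b → w b = 0) {a : Fin n} (ha : InClass P i a) :
    (P *ᵥ w) a = (classMatrix P i *ᵥ w) a := by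
  simp only [mulVec, dotProduct]
  refine Finset.sum_congr rfl fun b _ => ?_
  by_cases hb : InClass P i b
  · rw [classMatrix_apply_of_inClass ha hb]
  · simp [hw b hb]

lemma exists_classMatrix_pow_apply_pos (hP : ∀ a b, 0 ≤ P a b) {a b : Fin n}
    (ha : InClass P i a) (hb : InClass P i b) : ∃ m, 0 < (classMatrix P i ^ m) a b := by
  have hab : Access P a b := ha.2.trans hb.1
  induction hab using Relation.ReflTransGen.head_induction_on with
  | refl => exact ⟨0, by simp⟩
  | @head a k hak hkb ih =>
    have hk : InClass P i k := ⟨ha.1.tail hak, hkb.trans hb.2⟩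
    obtain ⟨m, hm⟩ := ih hk
    refine ⟨m + 1, ?_⟩
    rw [pow_succ', mul_apply]
    have hterm : 0 < classMatrix P i a k * (classMatrix P i ^ m) k b := by
      rw [classMatrix_apply_of_inClass ha hk]
      exact mul_pos hak hm
    exact hterm.trans_le <| Finset.single_le_sum
      (f := fun l => classMatrix P i a l * (classMatrix P i ^ m) l b)
      (fun l _ => mul_nonneg (classMatrix_nonneg hP i a l)
        (pow_apply_nonneg (classMatrix_nonneg hP i) m l b)) (Finset.mem_univ k)

end Classes

section Necessity

variable {n : ℕ} {P : Matrix (Fin n) (Fin n) ℝ} {lam : ℝ}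

lemma rho_classMatrix_lt_of_subinvariant (hP : ∀ a b, 0 ≤ P a b) (hlam : 0 < lam) {i j : Fin n}
    {x : Fin n → ℝ} (hx : ∀ a, 0 ≤ x a)
    (hy : ∀ a, 0 ≤ ((lam • (1 : Matrix (Fin n) (Fin n) ℝ) - classMatrix P i) *ᵥ x) a)
    (hj : InClass P i j)
    (hyj : 0 < ((lam • (1 : Matrix (Fin n) (Fin n) ℝ) - classMatrix P i) *ᵥ x) j) :
    rho (classMatrix P i) < lam := by
  set C := classMatrix P i
  set y := (lam • (1 : Matrix (Fin n) (Fin n) ℝ) - C) *ᵥ x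
  have hC : ∀ a b, 0 ≤ C a b := classMatrix_nonneg hP i
  have hreach : ∀ a, ∀ᶠ N in atTop,
      InClass P i a → 0 < ((∑ k ∈ Finset.range N, C ^ k) *ᵥ y) a := by
    intro a
    by_cases ha : InClass P i a
    · obtain ⟨m, hm⟩ := exists_classMatrix_pow_apply_pos hP ha hj
      filter_upwards [eventually_gt_atTop m] with N hN _
      rw [sum_mulVec, Finset.sum_apply]
      calc 0 < (C ^ m) a j * y j := mul_pos hm hyj
        _ ≤ (C ^ m *ᵥ y) a := mul_le_mulVec_apply (pow_apply_nonneg hC m) hy a j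
        _ ≤ ∑ k ∈ Finset.range N, (C ^ k *ᵥ y) a :=
          Finset.single_le_sum (f := fun k => (C ^ k *ᵥ y) a)
            (fun k _ => mulVec_apply_nonneg (pow_apply_nonneg hC k) hy a) (Finset.mem_range.2 hN)
    · exact Eventually.of_forall fun _ h => absurd h ha
  obtain ⟨N, hN⟩ := (eventually_all.2 hreach).exists
  -- `S` commutes with `C`, so `S *ᵥ x` is again subinvariant, now strictly on the whole class.
  set S := ∑ k ∈ Finset.range N, C ^ k
  have hS : ∀ a b, 0 ≤ S a b := fun a b => by
    simp only [S, Matrix.sum_apply]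
    exact Finset.sum_nonneg fun k _ => pow_apply_nonneg hC k a b
  have hcomm : (lam • (1 : Matrix (Fin n) (Fin n) ℝ) - C) *ᵥ (S *ᵥ x) = S *ᵥ y := by
    have : Commute (lam • (1 : Matrix (Fin n) (Fin n) ℝ) - C) S :=
      Commute.sum_right _ _ _ fun k _ =>
        (((Commute.one_left C).smul_left lam).sub_left (Commute.refl C)).pow_right k
    rw [mulVec_mulVec, this.eq, ← mulVec_mulVec]
  -- Padding by `1` off the class makes the vector positive without changing its image under `C`.
  set v := S *ᵥ x + fun a => if InClass P i a then 0 else 1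
  have hv : ∀ a, 0 ≤ v a := fun a =>
    add_nonneg (mulVec_apply_nonneg hS hx a) (by dsimp only; split_ifs <;> norm_num)
  have hCv : C *ᵥ v = C *ᵥ (S *ᵥ x) := classMatrix_mulVec_congr fun a ha => by simp [v, ha]
  refine rho_lt_of_mulVec_lt hC hv hlam fun a => ?_
  rw [hCv]
  by_cases ha : InClass P i a
  · have h := hN a ha
    rw [← hcomm, smul_one_sub_mulVec_apply] at h
    simp only [v, Pi.add_apply, if_pos ha, add_zero]
    linarith
  · rw [classMatrix_mulVec_apply_of_not_inClass ha]
    simp only [v, Pi.add_apply, if_neg ha]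
    exact mul_pos hlam (by linarith [mulVec_apply_nonneg hS hx a])

lemma pos_of_access_of_mulVec_eq (hP : ∀ a b, 0 ≤ P a b) {b x : Fin n → ℝ} (hb : ∀ a, 0 ≤ b a)
    (hx : ∀ a, 0 ≤ x a) (hsol : (lam • (1 : Matrix (Fin n) (Fin n) ℝ) - P) *ᵥ x = b)
    {a j : Fin n} (hbj : 0 < b j) (haj : Access P a j) : 0 < x a := by
  have hfix : ∀ c, lam * x c = (P *ᵥ x) c + b c := fun c => by
    rw [← hsol, smul_one_sub_mulVec_apply]; ring
  have hpos : ∀ c, 0 < (P *ᵥ x) c + b c → 0 < x c := fun c h =>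
    (hx c).lt_of_ne fun h0 => by rw [← hfix, ← h0, mul_zero] at h; exact h.false
  induction haj using Relation.ReflTransGen.head_induction_on with
  | refl => exact hpos j (by linarith [mulVec_apply_nonneg hP hx j])
  | @head a k hak _ ih =>
    have := mul_le_mulVec_apply hP hx a k
    exact hpos a (by nlinarith [mul_pos hak ih, hb a])

lemma rho_classMatrix_lt_of_mulVec_eq (hP : ∀ a b, 0 ≤ P a b) {b x : Fin n → ℝ}
    (hb : ∀ a, 0 ≤ b a) (hlam : 0 < lam) (hx : ∀ a, 0 ≤ x a)
    (hsol : (lam • (1 : Matrix (Fin n) (Fin n) ℝ) - P) *ᵥ x = b)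
    {i j : Fin n} (hbj : 0 < b j) (hij : Access P i j) : rho (classMatrix P i) < lam := by
  set y := (lam • (1 : Matrix (Fin n) (Fin n) ℝ) - classMatrix P i) *ᵥ x
  have hy_eq : ∀ a, y a = b a + ((P - classMatrix P i) *ᵥ x) a := fun a => by
    simp only [y, ← hsol, sub_mulVec, Pi.sub_apply]
    ring
  have hPC : ∀ a c, 0 ≤ (P - classMatrix P i) a c := fun a c =>
    sub_nonneg.2 (classMatrix_le hP i a c)
  have hy : ∀ a, 0 ≤ y a := fun a => by
    rw [hy_eq]; exact add_nonneg (hb a) (mulVec_apply_nonneg hPC hx a)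
  rcases hij.exists_exit (inClass_self P i) with hj | ⟨u, k, hu, hk, huk, hkj⟩
  · refine rho_classMatrix_lt_of_subinvariant hP hlam hx hy hj ?_
    show 0 < y j
    rw [hy_eq]; linarith [mulVec_apply_nonneg hPC hx j]
  · refine rho_classMatrix_lt_of_subinvariant hP hlam hx hy hu ?_
    have hxk := pos_of_access_of_mulVec_eq hP hb hx hsol hbj hkj
    have hexit := mul_le_mulVec_apply hPC hx u k
    rw [Matrix.sub_apply, classMatrix_apply_of_not_inClass_right hk, sub_zero] at hexit
    show 0 < y u
    rw [hy_eq]; nlinarith [mul_pos huk hxk, hb u]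

end Necessity

section Sufficiency

variable {n : ℕ} {P : Matrix (Fin n) (Fin n) ℝ} {lam : ℝ} {i : Fin n}

lemma eq_zero_of_not_inClass_of_mulVec_eq (hlam : lam ≠ 0) {u w : Fin n → ℝ}
    (hw : (lam • (1 : Matrix (Fin n) (Fin n) ℝ) - classMatrix P i) *ᵥ w = u)
    (hu : ∀ a, ¬ InClass P i a → u a = 0) {a : Fin n} (ha : ¬ InClass P i a) : w a = 0 := by
  have h := congrFun hw a
  rw [smul_one_sub_mulVec_apply, classMatrix_mulVec_apply_of_not_inClass ha, sub_zero, hu a ha] at h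
  exact (mul_eq_zero.1 h).resolve_left hlam

lemma mulVec_apply_eq_zero_of_not_access (hP : ∀ a b, 0 ≤ P a b) {w : Fin n → ℝ}
    (hw : ∀ k, ¬ InClass P i k → w k = 0) {a : Fin n} (ha : ¬ Access P a i) : (P *ᵥ w) a = 0 := by
  simp only [mulVec, dotProduct]
  refine Finset.sum_eq_zero fun k _ => ?_
  by_cases hk : InClass P i k
  · rw [((hP a k).eq_or_lt.resolve_right fun hak => ha (.head hak hk.2)).symm, zero_mul]
  · rw [hw k hk, mul_zero]

lemma exists_nonneg_mulVec_eq_on (hP : ∀ a b, 0 ≤ P a b) (hlam : 0 < lam) {b : Fin n → ℝ}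
    (hb : ∀ a, 0 ≤ b a) (U : Finset (Fin n)) (hU : ∀ i ∈ U, ∀ a, InClass P i a → a ∈ U)
    (hrho : ∀ i ∈ U, rho (classMatrix P i) < lam) :
    ∃ x : Fin n → ℝ, (∀ a, 0 ≤ x a) ∧ (∀ a ∉ U, x a = 0) ∧
      ∀ a ∈ U, ((lam • (1 : Matrix (Fin n) (Fin n) ℝ) - P) *ᵥ x) a = b a := by
  induction U using Finset.strongInduction with
  | H U ih =>
  rcases U.eq_empty_or_nonempty with rfl | hUne
  · exact ⟨0, fun _ => le_rfl, fun _ _ => rfl, by simp⟩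
  obtain ⟨i, hiU, hsource⟩ := Finset.exists_minimal_reflTransGen (fun a b => 0 < P a b) hUne
  -- No vertex of `U` outside the class of `i` has access to `i`, so the class sees the rest of `U`
  -- only through the right-hand side `u` below.
  set U' := U.filter (¬ InClass P i ·)
  have hU'U : U' ⊂ U := Finset.filter_ssubset.2 ⟨i, hiU, not_not.2 (inClass_self P i)⟩
  have hU' : ∀ a ∈ U', ∀ c, InClass P a c → c ∈ U' := fun a ha c hac => by
    rw [Finset.mem_filter] at ha ⊢
    exact ⟨hU a ha.1 c hac, fun hic => ha.2 ⟨hic.1.trans hac.2, hac.1.trans hic.2⟩⟩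
  obtain ⟨x', hx'0, hx'U', hx'⟩ :=
    ih U' hU'U hU' fun a ha => hrho a (Finset.filter_subset _ _ ha)
  set u : Fin n → ℝ := fun a => if InClass P i a then b a + (P *ᵥ x') a else 0
  have hu : ∀ a, 0 ≤ u a := fun a => by
    simp only [u]; split_ifs
    exacts [add_nonneg (hb a) (mulVec_apply_nonneg hP hx'0 a), le_rfl]
  obtain ⟨w, hw0, hw⟩ :=
    exists_nonneg_mulVec_eq_of_rho_lt (classMatrix_nonneg hP i) hlam (hrho i hiU) hu
  have hw_out : ∀ a, ¬ InClass P i a → w a = 0 := fun a ha =>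
    eq_zero_of_not_inClass_of_mulVec_eq hlam.ne' hw (fun c hc => if_neg hc) ha
  refine ⟨x' + w, fun a => add_nonneg (hx'0 a) (hw0 a), fun a ha => ?_, fun a ha => ?_⟩
  · rw [Pi.add_apply, hx'U' a fun h => ha (Finset.filter_subset _ _ h),
      hw_out a fun h => ha (hU i hiU a h), add_zero]
  rw [mulVec_add, Pi.add_apply, smul_one_sub_mulVec_apply, smul_one_sub_mulVec_apply]
  by_cases hai : InClass P i a
  · have hwa := congrFun hw a
    rw [smul_one_sub_mulVec_apply, ← mulVec_apply_eq_classMatrix_mulVec_apply hw_out hai] at hwa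
    simp only [u, if_pos hai] at hwa
    rw [hx'U' a fun h => (Finset.mem_filter.1 h).2 hai]
    linarith
  · have hx'a := hx' a (Finset.mem_filter.2 ⟨ha, hai⟩)
    rw [smul_one_sub_mulVec_apply] at hx'a
    rw [hw_out a hai, mulVec_apply_eq_zero_of_not_access hP hw_out fun h => hai ⟨hsource a ha h, h⟩]
    linarith

lemma exists_nonneg_mulVec_eq_of_rho_classMatrix_lt (hP : ∀ a b, 0 ≤ P a b) (hlam : 0 < lam)
    {b : Fin n → ℝ} (hb : ∀ a, 0 ≤ b a)
    (hrho : ∀ i, (∃ j, 0 < b j ∧ Access P i j) → rho (classMatrix P i) < lam) :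
    ∃ x : Fin n → ℝ, (∀ a, 0 ≤ x a) ∧ (lam • (1 : Matrix (Fin n) (Fin n) ℝ) - P) *ᵥ x = b := by
  set T := Finset.univ.filter fun i => ∃ j, 0 < b j ∧ Access P i j
  have hT : ∀ i, i ∈ T ↔ ∃ j, 0 < b j ∧ Access P i j := by simp [T]
  obtain ⟨x, hx0, hxT, hx⟩ := exists_nonneg_mulVec_eq_on hP hlam hb T
    (fun i hi a ha => by
      obtain ⟨j, hj, hij⟩ := (hT i).1 hi
      exact (hT a).2 ⟨j, hj, ha.2.trans hij⟩)
    fun i hi => hrho i ((hT i).1 hi)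
  refine ⟨x, hx0, funext fun a => ?_⟩
  by_cases ha : a ∈ T
  · exact hx a ha
  have hba : b a = 0 := ((hb a).eq_or_lt.resolve_right fun h => ha ((hT a).2 ⟨a, h, .refl⟩)).symm
  have hPx : (P *ᵥ x) a = 0 := by
    simp only [mulVec, dotProduct]
    refine Finset.sum_eq_zero fun k _ => ?_
    by_cases hk : k ∈ T
    · have hPak : P a k = 0 := ((hP a k).eq_or_lt.resolve_right fun hak => ha <| by
        obtain ⟨j, hj, hkj⟩ := (hT k).1 hk
        exact (hT a).2 ⟨j, hj, .head hak hkj⟩).symm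
      rw [hPak, zero_mul]
    · rw [hxT k hk, mul_zero]
  rw [smul_one_sub_mulVec_apply, hxT a ha, hPx, hba, mul_zero, sub_zero]

end Sufficiency

theorem stmt6 {n : ℕ} (P : Matrix (Fin n) (Fin n) ℝ) (hP : ∀ i j, 0 ≤ P i j)
    (b : Fin n → ℝ) (hb : ∀ i, 0 ≤ b i) (lam : ℝ) (hlam : 0 < lam) :
    (∃ x : Fin n → ℝ, (∀ i, 0 ≤ x i) ∧
        (lam • (1 : Matrix (Fin n) (Fin n) ℝ) - P).mulVec x = b) ↔
      ∀ i : Fin n, (∃ j, 0 < b j ∧ Access P i j) → rho (classMatrix P i) < lam := by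
  constructor
  · rintro ⟨x, hx, hsol⟩ i ⟨j, hbj, hij⟩
    exact rho_classMatrix_lt_of_mulVec_eq hP hb hlam hx hsol hbj hij
  · exact exists_nonneg_mulVec_eq_of_rho_classMatrix_lt hP hlam hb
end

section
/- Let K be a proper cone in ℝⁿ with K ⊆ K* (subpolar), let A be an n×n real matrix with AK ⊆ K, let b ∈ K be nonzero, and let λ > 0. Then the equations (λI - A)x = b with x ∈ K and (Aᵀ - λI)z = b with z ∈ K* cannot both be solvable. -/
open Filter Matrix
open scoped Topology

/-!
Pairing the two equations gives `zᵀb + bᵀx = zᵀ(λI - A)x + zᵀ(A - λI)x = 0`. Both terms are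
nonnegative (`z ∈ K*`, and `b ∈ K ⊆ K*`), so `bᵀx = 0`. Then `bᵀb = λ bᵀx - bᵀAx = -bᵀAx ≤ 0`,
again by subpolarity since `Ax ∈ K`, forcing `b = 0`.
-/

section
variable {ι R : Type*} [Fintype ι] [DecidableEq ι]

theorem dotProduct_add_dotProduct_eq_zero_of_mulVec_eq [CommRing R] {A : Matrix ι ι R} {lam : R}
    {x z b : ι → R} (hx : (lam • 1 - A) *ᵥ x = b) (hz : (Aᵀ - lam • 1) *ᵥ z = b) :
    z ⬝ᵥ b + b ⬝ᵥ x = 0 :=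
  calc z ⬝ᵥ b + b ⬝ᵥ x = z ⬝ᵥ ((lam • 1 - A) *ᵥ x) + ((Aᵀ - lam • 1) *ᵥ z) ⬝ᵥ x := by
        rw [hx, hz]
    _ = 0 := by
        simp only [sub_mulVec, smul_mulVec, one_mulVec, mulVec_transpose, dotProduct_sub,
          sub_dotProduct, dotProduct_smul, smul_dotProduct, dotProduct_mulVec, smul_eq_mul]
        ring

theorem eq_zero_of_mulVec_eq_of_dotProduct_eq_zero [CommRing R] [LinearOrder R]
    [IsStrictOrderedRing R] {K : Set (ι → R)} (hsub : K ⊆ {z | ∀ x ∈ K, 0 ≤ z ⬝ᵥ x})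
    {A : Matrix ι ι R} {lam : R} {x b : ι → R} (hAx : A *ᵥ x ∈ K) (hb : b ∈ K)
    (hx : (lam • 1 - A) *ᵥ x = b) (hbx : b ⬝ᵥ x = 0) : b = 0 := by
  have hbAx : 0 ≤ b ⬝ᵥ (A *ᵥ x) := hsub hb _ hAx
  have hbb : b ⬝ᵥ b = -(b ⬝ᵥ (A *ᵥ x)) :=
    calc b ⬝ᵥ b = b ⬝ᵥ ((lam • 1 - A) *ᵥ x) := by rw [hx]
      _ = -(b ⬝ᵥ (A *ᵥ x)) := by
          simp only [sub_mulVec, smul_mulVec, one_mulVec, dotProduct_sub, dotProduct_smul, hbx,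
            smul_zero, zero_sub]
  have hbb_nonneg : 0 ≤ b ⬝ᵥ b := Finset.sum_nonneg fun i _ => mul_self_nonneg (b i)
  exact dotProduct_self_eq_zero.mp (le_antisymm (hbb ▸ neg_nonpos.mpr hbAx) hbb_nonneg)

end

theorem stmt10_general {n : ℕ} {K : Set (Fin n → ℝ)}
    (hsub : K ⊆ {z : Fin n → ℝ | ∀ x ∈ K, 0 ≤ z ⬝ᵥ x})
    (A : Matrix (Fin n) (Fin n) ℝ) (hA : ∀ v ∈ K, A.mulVec v ∈ K)
    (b : Fin n → ℝ) (hb : b ∈ K) (hb0 : b ≠ 0) (lam : ℝ) :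
    ¬ ((∃ x ∈ K, (lam • (1 : Matrix (Fin n) (Fin n) ℝ) - A).mulVec x = b) ∧
       (∃ z ∈ {z : Fin n → ℝ | ∀ x ∈ K, 0 ≤ z ⬝ᵥ x},
         (A.transpose - lam • (1 : Matrix (Fin n) (Fin n) ℝ)).mulVec z = b)) := by
  rintro ⟨⟨x, hxK, hx⟩, ⟨z, hzK, hz⟩⟩
  have hzb : 0 ≤ z ⬝ᵥ b := hzK b hb
  have hbx : 0 ≤ b ⬝ᵥ x := hsub hb x hxK
  have hsum := dotProduct_add_dotProduct_eq_zero_of_mulVec_eq hx hz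
  exact hb0 (eq_zero_of_mulVec_eq_of_dotProduct_eq_zero hsub (hA x hxK) hb hx (by linarith))

theorem stmt10 {n : ℕ} {K : Set (Fin n → ℝ)} (hK : IsProperCone K)
    (hsub : K ⊆ {z : Fin n → ℝ | ∀ x ∈ K, 0 ≤ z ⬝ᵥ x})
    (A : Matrix (Fin n) (Fin n) ℝ) (hA : ∀ v ∈ K, A.mulVec v ∈ K)
    (b : Fin n → ℝ) (hb : b ∈ K) (hb0 : b ≠ 0) (lam : ℝ) (hlam : 0 < lam) :
    ¬ ((∃ x ∈ K, (lam • (1 : Matrix (Fin n) (Fin n) ℝ) - A).mulVec x = b) ∧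
       (∃ z ∈ {z : Fin n → ℝ | ∀ x ∈ K, 0 ≤ z ⬝ᵥ x},
         (A.transpose - lam • (1 : Matrix (Fin n) (Fin n) ℝ)).mulVec z = b)) :=
  stmt10_general hsub A hA b hb hb0 lam
end

section
/- Let K be a proper cone in ℝⁿ, A an n×n real matrix with AK ⊆ K, and λ ∈ ℝ. If A - λI is invertible and (A - λI)^{-1} K ⊆ K, then λ is strictly less than every distinguished eigenvalue of A for K and strictly less than every distinguished eigenvalue of Aᵀ for K*. -/
/-!
Put `B = A - λ • 1`. If `v ∈ K` is an eigenvector of `A` for `μ`, then `v = (μ - λ) • B⁻¹ v`,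
so `μ ≤ λ` would put `-v` in `K` as well, and pointedness forces `v = 0`. Dually, if `z ∈ K*`
is an eigenvector of `Aᵀ` for `μ`, then `z ⬝ᵥ x = (μ - λ) * (z ⬝ᵥ B⁻¹ x)` for `x ∈ K`, so `μ ≤ λ`
would make `z` vanish on `K`; but `K` has nonempty interior, hence spans `ℝⁿ`, and `z = 0`.
-/

open Matrix

theorem Matrix.eq_zero_of_forall_dotProduct_eq_zero_of_nonempty_interior {ι : Type*} [Fintype ι]
    {K : Set (ι → ℝ)} (hK : (interior K).Nonempty) {z : ι → ℝ} (hz : ∀ x ∈ K, z ⬝ᵥ x = 0) :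
    z = 0 := by
  have hker : LinearMap.ker (dotProductBilin ℝ ℝ z) = ⊤ :=
    Submodule.eq_top_of_nonempty_interior' _ (hK.mono (interior_mono hz))
  have hzz : z ∈ LinearMap.ker (dotProductBilin ℝ ℝ z) := hker ▸ Submodule.mem_top
  exact dotProduct_self_eq_zero.mp hzz

namespace IsProperCone

variable {n : ℕ} {K : Set (Fin n → ℝ)}

theorem eq_zero_of_mem_of_neg_mem (hK : IsProperCone K) {v : Fin n → ℝ} (hv : v ∈ K)
    (hnv : -v ∈ K) : v = 0 := by
  have hmem : v ∈ K ∩ -K := ⟨hv, Set.mem_neg.mpr hnv⟩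
  rwa [hK.pointed] at hmem

variable {B : Matrix (Fin n) (Fin n) ℝ}

theorem pos_of_mulVec_eq_smul (hK : IsProperCone K) (hB : IsUnit B.det)
    (hinv : ∀ b ∈ K, B⁻¹ *ᵥ b ∈ K) {c : ℝ} {v : Fin n → ℝ} (hv0 : v ≠ 0) (hv : v ∈ K)
    (hBv : B *ᵥ v = c • v) : 0 < c := by
  by_contra! hc
  have hv_eq : v = c • B⁻¹ *ᵥ v :=
    calc v = B⁻¹ *ᵥ (B *ᵥ v) := by rw [mulVec_mulVec, nonsing_inv_mul _ hB, one_mulVec]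
      _ = c • B⁻¹ *ᵥ v := by rw [hBv, mulVec_smul]
  have hneg : -v ∈ K := by
    rw [hv_eq, ← neg_smul]
    exact hK.smul_mem _ (neg_nonneg.mpr hc) _ (hinv v hv)
  exact hv0 (hK.eq_zero_of_mem_of_neg_mem hv hneg)

theorem pos_of_transpose_mulVec_eq_smul (hK : IsProperCone K) (hB : IsUnit B.det)
    (hinv : ∀ b ∈ K, B⁻¹ *ᵥ b ∈ K) {c : ℝ} {z : Fin n → ℝ} (hz0 : z ≠ 0)
    (hz : ∀ x ∈ K, 0 ≤ z ⬝ᵥ x) (hBz : Bᵀ *ᵥ z = c • z) : 0 < c := by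
  by_contra! hc
  refine hz0 (eq_zero_of_forall_dotProduct_eq_zero_of_nonempty_interior hK.full fun x hx => ?_)
  have hx_eq : z ⬝ᵥ x = c * (z ⬝ᵥ B⁻¹ *ᵥ x) :=
    calc z ⬝ᵥ x = z ⬝ᵥ B *ᵥ (B⁻¹ *ᵥ x) := by
          rw [mulVec_mulVec, mul_nonsing_inv _ hB, one_mulVec]
      _ = (Bᵀ *ᵥ z) ⬝ᵥ B⁻¹ *ᵥ x := by rw [dotProduct_mulVec, mulVec_transpose]
      _ = c * (z ⬝ᵥ B⁻¹ *ᵥ x) := by rw [hBz, smul_dotProduct, smul_eq_mul]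
  have hle : z ⬝ᵥ x ≤ 0 := hx_eq ▸ mul_nonpos_of_nonpos_of_nonneg hc (hz _ (hinv x hx))
  exact le_antisymm hle (hz x hx)

end IsProperCone

theorem stmt14_general {n : ℕ} {K : Set (Fin n → ℝ)} (hK : IsProperCone K)
    (A : Matrix (Fin n) (Fin n) ℝ) (lam : ℝ)
    (hdet : (A - lam • (1 : Matrix (Fin n) (Fin n) ℝ)).det ≠ 0)
    (hinv : ∀ b ∈ K, ((A - lam • (1 : Matrix (Fin n) (Fin n) ℝ))⁻¹).mulVec b ∈ K) :
    (∀ (mu : ℝ) (v : Fin n → ℝ), v ≠ 0 → v ∈ K → A.mulVec v = mu • v → lam < mu) ∧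
    (∀ (mu : ℝ) (z : Fin n → ℝ), z ≠ 0 → (∀ x ∈ K, 0 ≤ z ⬝ᵥ x) →
      A.transpose.mulVec z = mu • z → lam < mu) := by
  have hB : IsUnit (A - lam • (1 : Matrix (Fin n) (Fin n) ℝ)).det := isUnit_iff_ne_zero.mpr hdet
  refine ⟨fun mu v hv0 hv heig => ?_, fun mu z hz0 hz heig => ?_⟩
  · have hBv : (A - lam • 1) *ᵥ v = (mu - lam) • v := by
      rw [sub_mulVec, smul_mulVec, one_mulVec, heig, sub_smul]
    exact sub_pos.mp (hK.pos_of_mulVec_eq_smul hB hinv hv0 hv hBv)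
  · have hBz : (A - lam • 1)ᵀ *ᵥ z = (mu - lam) • z := by
      rw [transpose_sub, transpose_smul, transpose_one, sub_mulVec, smul_mulVec, one_mulVec, heig,
        sub_smul]
    exact sub_pos.mp (hK.pos_of_transpose_mulVec_eq_smul hB hinv hz0 hz hBz)

theorem stmt14 {n : ℕ} {K : Set (Fin n → ℝ)} (hK : IsProperCone K)
    (A : Matrix (Fin n) (Fin n) ℝ) (hA : ∀ v ∈ K, A.mulVec v ∈ K) (lam : ℝ)
    (hdet : (A - lam • (1 : Matrix (Fin n) (Fin n) ℝ)).det ≠ 0)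
    (hinv : ∀ b ∈ K, ((A - lam • (1 : Matrix (Fin n) (Fin n) ℝ))⁻¹).mulVec b ∈ K) :
    (∀ (mu : ℝ) (v : Fin n → ℝ), v ≠ 0 → v ∈ K → A.mulVec v = mu • v → lam < mu) ∧
    (∀ (mu : ℝ) (z : Fin n → ℝ), z ≠ 0 → (∀ x ∈ K, 0 ≤ z ⬝ᵥ x) →
      A.transpose.mulVec z = mu • z → lam < mu) :=
  stmt14_general hK A lam hdet hinv
end

section
/- Let K be a proper cone in ℝⁿ, A an n×n real matrix with AK ⊆ K, and x ∈ K nonzero. Define the upper Collatz-Wielandt number R_A(x) = inf{σ ≥ 0 : σx - Ax ∈ K} (infimum of the empty set being ∞). Then R_A(x) = ρ_x(A) if and only if ρ_x(A)·x - Ax ∈ K. -/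
open Filter Matrix
open scoped Topology

/-!
The set `S = {σ ≥ 0 | σ • x - A x ∈ K}` is closed and bounded below, so whenever it is nonempty
its infimum `R_A(x)` belongs to it; hence `R_A(x) = ρ_x(A)` forces `ρ_x(A) ∈ S`. Conversely, if
`ρ_x(A) ∈ S` it suffices that `ρ_x(A) ≤ σ` for every `σ ∈ S`. For such `σ`, induction gives
`σ ^ m • x - A ^ m x ∈ K`, and since a closed pointed cone in finite dimension is normal this
yields `‖A ^ m x‖ ≤ C σ ^ m`, whose `m`-th roots have limsup at most `σ`.
-/

/-- Normality of a closed pointed cone: `u ↦ infDist (-u) K` is positive, hence bounded below,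
on the compact set `K ∩ sphere 0 1`. -/
theorem exists_norm_le_mul_norm_of_sub_mem {E : Type*} [NormedAddCommGroup E] [NormedSpace ℝ E]
    [ProperSpace E] {K : Set E} (hKc : IsClosed K)
    (hKs : ∀ c : ℝ, 0 < c → ∀ y ∈ K, c • y ∈ K) (hKp : ∀ y ∈ K, -y ∈ K → y = 0) :
    ∃ C, 0 < C ∧ ∀ y ∈ K, ∀ z, z - y ∈ K → ‖y‖ ≤ C * ‖z‖ := by
  have hpos : ∀ u ∈ K ∩ Metric.sphere 0 1, 0 < Metric.infDist (-u) K := by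
    rintro u ⟨huK, hu⟩
    rw [← Metric.infDist_pos_iff_notMem_closure ⟨u, huK⟩, hKc.closure_eq]
    intro hnu
    simp [hKp u huK hnu] at hu
  obtain ⟨δ, hδ, hδle⟩ := ((isCompact_sphere (0 : E) 1).inter_left hKc).exists_forall_le'
    ((Metric.continuous_infDist_pt K).comp continuous_neg).continuousOn hpos
  refine ⟨δ⁻¹, inv_pos.2 hδ, fun y hy z hzy => ?_⟩
  rcases eq_or_ne y 0 with rfl | hy0
  · simp only [norm_zero]
    positivity
  have hny : 0 < ‖y‖ := norm_pos_iff.2 hy0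
  set u := ‖y‖⁻¹ • y
  have hu : u ∈ K ∩ Metric.sphere 0 1 :=
    ⟨hKs _ (inv_pos.2 hny) y hy, by simp [u, norm_smul, hny.ne']⟩
  have hdist : δ ≤ ‖z‖ / ‖y‖ := calc
    δ ≤ Metric.infDist (-u) K := hδle u hu
    _ ≤ dist (-u) (‖y‖⁻¹ • (z - y)) :=
      Metric.infDist_le_dist_of_mem (hKs _ (inv_pos.2 hny) _ hzy)
    _ = ‖z‖ / ‖y‖ := by
      rw [dist_eq_norm, smul_sub, neg_sub_left, sub_add_cancel, norm_neg, norm_smul,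
        norm_inv, norm_norm, inv_mul_eq_div]
  rw [le_div_iff₀ hny] at hdist
  rw [inv_mul_eq_div, le_div_iff₀ hδ]
  linarith

theorem limsup_rpow_one_div_le_of_le_mul_pow_s15 {a : ℕ → ℝ} (ha : ∀ m, 0 ≤ a m) {C σ : ℝ}
    (hC : 0 ≤ C) (hσ : 0 ≤ σ) (h : ∀ m, a m ≤ C * σ ^ m) :
    limsup (fun m : ℕ => a m ^ ((1 : ℝ) / m)) atTop ≤ σ := by
  set g : ℕ → ℝ := fun m => (C + 1) ^ ((1 : ℝ) / m) * σ
  have hg : Tendsto g atTop (𝓝 σ) := by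
    have hroot : Tendsto (fun m : ℕ => (C + 1) ^ ((1 : ℝ) / m)) atTop (𝓝 1) := by
      simpa [Function.comp_def] using
        (Real.continuousAt_const_rpow (by positivity : C + 1 ≠ 0)).tendsto.comp
          tendsto_one_div_atTop_nhds_zero_nat
    simpa [g] using hroot.mul_const σ
  have hle : ∀ᶠ m : ℕ in atTop, a m ^ ((1 : ℝ) / m) ≤ g m := by
    filter_upwards [eventually_ne_atTop 0] with m hm
    calc a m ^ ((1 : ℝ) / m) ≤ ((C + 1) * σ ^ m) ^ ((1 : ℝ) / m) := by
          gcongr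
          · exact ha m
          · exact (h m).trans (by nlinarith [pow_nonneg hσ m])
      _ = g m := by
          rw [Real.mul_rpow (by positivity) (by positivity), one_div,
            Real.pow_rpow_inv_natCast hσ hm, ← one_div]
  calc limsup (fun m : ℕ => a m ^ ((1 : ℝ) / m)) atTop ≤ limsup g atTop :=
        limsup_le_limsup hle
          (isCoboundedUnder_le_of_le atTop fun m => Real.rpow_nonneg (ha m) _)
          hg.isBoundedUnder_le
    _ = σ := hg.limsup_eq

theorem localRho_nonneg {n : ℕ} (A : Matrix (Fin n) (Fin n) ℝ) (b : Fin n → ℝ) :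
    0 ≤ localRho A b := by
  -- This needs no boundedness: an unbounded sequence has the junk limsup `sInf ∅ = 0`.
  rw [localRho, limsup_eq]
  refine Real.sInf_nonneg fun c hc => ?_
  obtain ⟨m, hm⟩ := hc.exists
  exact (Real.rpow_nonneg (norm_nonneg _) _).trans hm

namespace IsProperCone

variable {n : ℕ} {K : Set (Fin n → ℝ)}

theorem add_mem_s15 (hK : IsProperCone K) {y z : Fin n → ℝ} (hy : y ∈ K) (hz : z ∈ K) :
    y + z ∈ K := by
  have hmid := hK.smul_mem 2 zero_le_two _
    (hK.convex hy hz (by norm_num : (0 : ℝ) ≤ 1 / 2) (by norm_num : (0 : ℝ) ≤ 1 / 2) (by norm_num))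
  rwa [smul_add, smul_smul, smul_smul, show (2 : ℝ) * (1 / 2) = 1 by norm_num, one_smul,
    one_smul] at hmid

theorem eq_zero_of_neg_mem (hK : IsProperCone K) {y : Fin n → ℝ} (hy : y ∈ K) (hny : -y ∈ K) :
    y = 0 := by
  have : y ∈ K ∩ -K := ⟨hy, Set.mem_neg.2 hny⟩
  rwa [hK.pointed] at this

theorem exists_norm_le_mul_norm_of_sub_mem (hK : IsProperCone K) :
    ∃ C, 0 < C ∧ ∀ y ∈ K, ∀ z, z - y ∈ K → ‖y‖ ≤ C * ‖z‖ :=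
  _root_.exists_norm_le_mul_norm_of_sub_mem hK.isClosed
    (fun c hc => hK.smul_mem c hc.le) fun _ => hK.eq_zero_of_neg_mem

variable {A : Matrix (Fin n) (Fin n) ℝ}

theorem pow_mulVec_mem (hA : ∀ v ∈ K, A.mulVec v ∈ K) {x : Fin n → ℝ} (hx : x ∈ K) (m : ℕ) :
    (A ^ m).mulVec x ∈ K := by
  induction m with
  | zero => simpa using hx
  | succ m ih => simpa [pow_succ', ← Matrix.mulVec_mulVec] using hA _ ih

theorem pow_smul_sub_pow_mulVec_mem (hK : IsProperCone K) (hA : ∀ v ∈ K, A.mulVec v ∈ K)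
    {x : Fin n → ℝ} {σ : ℝ} (hσ0 : 0 ≤ σ) (hσ : σ • x - A.mulVec x ∈ K) (m : ℕ) :
    σ ^ m • x - (A ^ m).mulVec x ∈ K := by
  induction m with
  | zero => simpa using hK.zero_mem
  | succ m ih =>
    have hsplit : σ ^ (m + 1) • x - (A ^ (m + 1)).mulVec x =
        σ ^ m • (σ • x - A.mulVec x) + A.mulVec (σ ^ m • x - (A ^ m).mulVec x) := by
      rw [Matrix.mulVec_sub, Matrix.mulVec_smul, Matrix.mulVec_mulVec, ← pow_succ', smul_sub,
        smul_smul, ← pow_succ]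
      abel
    rw [hsplit]
    exact hK.add_mem_s15 (hK.smul_mem _ (pow_nonneg hσ0 m) _ hσ) (hA _ ih)

theorem localRho_le (hK : IsProperCone K) (hA : ∀ v ∈ K, A.mulVec v ∈ K) {x : Fin n → ℝ}
    (hx : x ∈ K) {σ : ℝ} (hσ0 : 0 ≤ σ) (hσ : σ • x - A.mulVec x ∈ K) :
    localRho A x ≤ σ := by
  obtain ⟨C, hC, hnormal⟩ := hK.exists_norm_le_mul_norm_of_sub_mem
  refine limsup_rpow_one_div_le_of_le_mul_pow_s15 (fun _ => norm_nonneg _)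
    (mul_nonneg hC.le (norm_nonneg x)) hσ0 fun m => ?_
  calc ‖(A ^ m).mulVec x‖ ≤ C * ‖σ ^ m • x‖ :=
        hnormal _ (pow_mulVec_mem hA hx m) _ (hK.pow_smul_sub_pow_mulVec_mem hA hσ0 hσ m)
    _ = C * ‖x‖ * σ ^ m := by
        rw [norm_smul, Real.norm_of_nonneg (pow_nonneg hσ0 m)]
        ring

end IsProperCone

theorem stmt15_general {n : ℕ} {K : Set (Fin n → ℝ)} (hK : IsProperCone K)
    (A : Matrix (Fin n) (Fin n) ℝ) (hA : ∀ v ∈ K, A.mulVec v ∈ K)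
    (x : Fin n → ℝ) (hx : x ∈ K) :
    ({σ : ℝ | 0 ≤ σ ∧ σ • x - A.mulVec x ∈ K}.Nonempty ∧
      sInf {σ : ℝ | 0 ≤ σ ∧ σ • x - A.mulVec x ∈ K} = localRho A x) ↔
    localRho A x • x - A.mulVec x ∈ K := by
  set S := {σ : ℝ | 0 ≤ σ ∧ σ • x - A.mulVec x ∈ K}
  have hbdd : BddBelow S := ⟨0, fun _ hσ => hσ.1⟩
  have hclosed : IsClosed S :=
    isClosed_Ici.inter (hK.isClosed.preimage (by fun_prop))
  constructor
  · rintro ⟨hne, hinf⟩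
    exact (hinf ▸ hclosed.csInf_mem hne hbdd).2
  · intro h
    have hleast : IsLeast S (localRho A x) :=
      ⟨⟨localRho_nonneg A x, h⟩, fun σ hσ => hK.localRho_le hA hx hσ.1 hσ.2⟩
    exact ⟨⟨_, hleast.1⟩, hleast.csInf_eq⟩

/-- `R_A(x) = ρ_x(A)` (with `R_A(x)` finite, i.e. the defining set nonempty) iff
`ρ_x(A)·x - Ax ∈ K`. -/
theorem stmt15 {n : ℕ} {K : Set (Fin n → ℝ)} (hK : IsProperCone K)
    (A : Matrix (Fin n) (Fin n) ℝ) (hA : ∀ v ∈ K, A.mulVec v ∈ K)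
    (x : Fin n → ℝ) (hx : x ∈ K) (hx0 : x ≠ 0) :
    ({σ : ℝ | 0 ≤ σ ∧ σ • x - A.mulVec x ∈ K}.Nonempty ∧
      sInf {σ : ℝ | 0 ≤ σ ∧ σ • x - A.mulVec x ∈ K} = localRho A x) ↔
    localRho A x • x - A.mulVec x ∈ K :=
  stmt15_general hK A hA x hx
end
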